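/- arXiv:1905.01462 — 10 statements merged into one kernel-verified Lean document; each statement's English description precedes it below -/
import Mathlib

section
/- Let F be a field of characteristic different from 2 and 3, let a₄, a₆ ∈ F and let W be the Weierstrass curve y² = x³ + a₄x + a₆ with discriminant Δ ≠ 0. Let P = (x₀, y₀) be an affine point of W of order exactly 3 in the group of points W(F). Then y₀ ≠ 0, and, setting λ = (3x₀² + a₄)/(2y₀) (the slope of the tangent line to W at P), the change of variables x ↦ x + x₀, y ↦ y + λx + y₀ (the variable change with u = 1, r = x₀, s = λ, t = y₀) transforms W into a Weierstrass curve W′ with coefficients a₁′ = 2λ, a₂′ = 0, a₃′ = 2y₀, a₄′ = 0, a₆′ = 0; in particular W′ has the form y² + Axy + By = x³ with B = 2y₀ ≠ 0, and the discriminant of W′ equals Δ. -/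
open WeierstrassCurve

open Classical in
/-- Let `F` be a field of characteristic distinct from `2` and `3`, and let
`W : y² = x³ + a₄x + a₆` be a Weierstrass curve over `F` with discriminant `Δ ≠ 0`.
If `P = (x₀, y₀)` is an affine point of `W` of exact order `3` in the group of points `W(F)`,
then `y₀ ≠ 0` and, with `λ = (3x₀² + a₄)/(2y₀)` the tangent slope at `P`, the variable change
`(u, r, s, t) = (1, x₀, λ, y₀)` transforms `W` into a Weierstrass curve `W'` with coefficients
`a₁' = 2λ`, `a₂' = 0`, `a₃' = 2y₀`, `a₄' = 0`, `a₆' = 0`; in particular `W'` has the shape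
`y² + Axy + By = x³` with `B = 2y₀ ≠ 0`, and `W'.Δ = W.Δ`. -/
theorem stmt0 (F : Type*) [Field F] (h2 : ringChar F ≠ 2) (h3 : ringChar F ≠ 3)
    (a₄ a₆ : F)
    (W : WeierstrassCurve F)
    (hW : W = { a₁ := 0, a₂ := 0, a₃ := 0, a₄ := a₄, a₆ := a₆ })
    (hΔ : W.Δ ≠ 0)
    (x₀ y₀ : F) (hP : W.toAffine.Nonsingular x₀ y₀)
    (hord : addOrderOf (WeierstrassCurve.Affine.Point.some _ _ hP) = 3) :
    y₀ ≠ 0 ∧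
    ∀ lam : F, lam = (3 * x₀ ^ 2 + a₄) / (2 * y₀) →
      ∀ W' : WeierstrassCurve F,
        W' = (⟨1, x₀, lam, y₀⟩ : WeierstrassCurve.VariableChange F) • W →
          W'.a₁ = 2 * lam ∧ W'.a₂ = 0 ∧ W'.a₃ = 2 * y₀ ∧ W'.a₄ = 0 ∧ W'.a₆ = 0 ∧
          2 * y₀ ≠ 0 ∧ W'.Δ = W.Δ := by
  have htwo : (2 : F) ≠ 0 := Ring.two_ne_zero h2
  -- the defining equation of the point
  have heq : y₀ ^ 2 = x₀ ^ 3 + a₄ * x₀ + a₆ := by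
    have := hP.1
    rw [WeierstrassCurve.Affine.equation_iff, hW] at this
    linear_combination this
  -- y₀ ≠ 0
  have hy0 : y₀ ≠ 0 := by
    intro h0
    have hneg : y₀ = W.toAffine.negY x₀ y₀ := by
      simp [WeierstrassCurve.Affine.negY, hW, h0]
    have h2P : (WeierstrassCurve.Affine.Point.some _ _ hP) +
        (WeierstrassCurve.Affine.Point.some _ _ hP) = 0 :=
      WeierstrassCurve.Affine.Point.add_self_of_Y_eq hneg
    have : addOrderOf (WeierstrassCurve.Affine.Point.some _ _ hP) ∣ 2 := by
      apply addOrderOf_dvd_of_nsmul_eq_zero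
      rw [two_nsmul, h2P]
    rw [hord] at this
    omega
  have h2y : (2 : F) * y₀ ≠ 0 := mul_ne_zero htwo hy0
  have hyne : y₀ ≠ W.toAffine.negY x₀ y₀ := by
    rw [hW]
    simp only [WeierstrassCurve.Affine.negY]
    intro h
    apply hy0
    have : 2 * y₀ = 0 := by simp at h; linear_combination h
    exact (mul_ne_zero htwo hy0 this).elim
  -- the slope
  have hslope : W.toAffine.slope x₀ x₀ y₀ y₀ = (3 * x₀ ^ 2 + a₄) / (2 * y₀) := by
    rw [WeierstrassCurve.Affine.slope_of_Y_ne rfl hyne, hW]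
    simp [WeierstrassCurve.Affine.negY]
    ring_nf
  -- 3P = 0, so 2P = -P
  have h3P : (3 : ℕ) • (WeierstrassCurve.Affine.Point.some _ _ hP) = 0 := by
    rw [← hord]; exact addOrderOf_nsmul_eq_zero _
  have h2Pneg : (WeierstrassCurve.Affine.Point.some _ _ hP) + (WeierstrassCurve.Affine.Point.some _ _ hP)
      = -(WeierstrassCurve.Affine.Point.some _ _ hP) := by
    have : ((WeierstrassCurve.Affine.Point.some _ _ hP) + (WeierstrassCurve.Affine.Point.some _ _ hP))
        + (WeierstrassCurve.Affine.Point.some _ _ hP) = 0 := by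
      rw [← h3P]; abel
    exact eq_neg_of_add_eq_zero_left this
  rw [WeierstrassCurve.Affine.Point.add_self_of_Y_ne hyne,
    WeierstrassCurve.Affine.Point.neg_some] at h2Pneg
  -- x-coordinate of 2P equals x₀
  have hx : W.toAffine.addX x₀ x₀ (W.toAffine.slope x₀ x₀ y₀ y₀) = x₀ := by
    injection h2Pneg
  set L : F := (3 * x₀ ^ 2 + a₄) / (2 * y₀) with hL
  have hkey : L ^ 2 = 3 * x₀ := by
    rw [WeierstrassCurve.Affine.addX, hslope, hW] at hx
    simp only at hx
    rw [hL]
    linear_combination hx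
  have hLy : L * (2 * y₀) = 3 * x₀ ^ 2 + a₄ := by
    rw [hL]; field_simp
  refine ⟨hy0, ?_⟩
  rintro lam rfl W' rfl
  subst hW
  refine ⟨?_, ?_, ?_, ?_, ?_, h2y, ?_⟩
  · simp [WeierstrassCurve.variableChange_a₁, WeierstrassCurve.variableChange_a₂, WeierstrassCurve.variableChange_a₃, WeierstrassCurve.variableChange_a₄, WeierstrassCurve.variableChange_a₆]
  · simp [WeierstrassCurve.variableChange_a₁, WeierstrassCurve.variableChange_a₂, WeierstrassCurve.variableChange_a₃, WeierstrassCurve.variableChange_a₄, WeierstrassCurve.variableChange_a₆]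
    linear_combination -hkey
  · simp [WeierstrassCurve.variableChange_a₁, WeierstrassCurve.variableChange_a₂, WeierstrassCurve.variableChange_a₃, WeierstrassCurve.variableChange_a₄, WeierstrassCurve.variableChange_a₆]
  · simp [WeierstrassCurve.variableChange_a₁, WeierstrassCurve.variableChange_a₂, WeierstrassCurve.variableChange_a₃, WeierstrassCurve.variableChange_a₄, WeierstrassCurve.variableChange_a₆]
    linear_combination -hLy
  · simp [WeierstrassCurve.variableChange_a₁, WeierstrassCurve.variableChange_a₂, WeierstrassCurve.variableChange_a₃, WeierstrassCurve.variableChange_a₄, WeierstrassCurve.variableChange_a₆]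
    linear_combination -heq
  · rw [WeierstrassCurve.variableChange_Δ]
    simp
end

section
/- Let F be a field equipped with a ℤ-valued additive (discrete) valuation v such that v(2) > 0 and v(3) = 0. Let A, B ∈ F with A ≠ 0, B ≠ 0, A³ − 24B ≠ 0 and A³ − 27B ≠ 0. If v(A³(A³ − 24B)³) > v(B³(A³ − 27B)) (i.e., the j-invariant j = A³(A³−24B)³/(B³(A³−27B)) of the curve y² + Axy + By = x³ has positive valuation), then 3·v(A) > v(B). -/
/-- Let `F` be a field with a `ℤ`-valued additive discrete valuation `v`
satisfying `v 2 > 0` and `v 3 = 0`.  Let `A, B ∈ F` be nonzero with `A³ − 24B ≠ 0` and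
`A³ − 27B ≠ 0`.  If the `j`-invariant `A³(A³ − 24B)³ / (B³(A³ − 27B))` of the curve
`y² + Axy + By = x³` has positive valuation, i.e.
`v (A³(A³ − 24B)³) > v (B³(A³ − 27B))`, then `3 v(A) > v(B)`. -/
theorem stmt2 (F : Type*) [Field F] (v : F → ℤ)
    (hv_mul : ∀ x y : F, x ≠ 0 → y ≠ 0 → v (x * y) = v x + v y)
    (hv_add : ∀ x y : F, x ≠ 0 → y ≠ 0 → x + y ≠ 0 → min (v x) (v y) ≤ v (x + y))
    (h2ne : (2 : F) ≠ 0) (h3ne : (3 : F) ≠ 0)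
    (hv2 : 0 < v 2) (hv3 : v 3 = 0)
    (A B : F) (hA : A ≠ 0) (hB : B ≠ 0)
    (h24 : A ^ 3 - 24 * B ≠ 0) (h27 : A ^ 3 - 27 * B ≠ 0)
    (hj : v (B ^ 3 * (A ^ 3 - 27 * B)) < v (A ^ 3 * (A ^ 3 - 24 * B) ^ 3)) :
    v B < 3 * v A := by
  -- basic facts
  have hv1 : v 1 = 0 := by
    have h := hv_mul 1 1 one_ne_zero one_ne_zero
    rw [mul_one] at h; linarith
  have hvneg1 : v (-1 : F) = 0 := by
    have h := hv_mul (-1 : F) (-1) (by norm_num) (by norm_num)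
    rw [neg_mul_neg, one_mul, hv1] at h; linarith
  have hvneg : ∀ x : F, x ≠ 0 → v (-x) = v x := by
    intro x hx
    have h := hv_mul (-1 : F) x (by norm_num) hx
    rw [neg_one_mul] at h; rw [h, hvneg1]; ring
  -- if v x < v y then v (x + y) = v x
  have key : ∀ x y : F, x ≠ 0 → y ≠ 0 → v x < v y → v (x + y) = v x := by
    intro x y hx hy hlt
    have hxy : x + y ≠ 0 := by
      intro h
      have hy' : y = -x := eq_neg_of_add_eq_zero_right h
      rw [hy', hvneg x hx] at hlt; exact lt_irrefl _ hlt
    have h1 : min (v x) (v y) ≤ v (x + y) := hv_add _ _ hx hy hxy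
    rw [min_eq_left hlt.le] at h1
    rcases le_or_gt (v (x + y)) (v x) with h | h
    · exact le_antisymm h h1
    · exfalso
      have hny : (-y : F) ≠ 0 := neg_ne_zero.mpr hy
      have hsum : (x + y) + -y = x := by ring
      have h2 := hv_add (x + y) (-y) hxy hny (by rw [hsum]; exact hx)
      rw [hsum, hvneg y hy] at h2
      exact absurd h2 (not_le.mpr (lt_min h hlt))
  -- cube valuations
  have hcube : ∀ x : F, x ≠ 0 → v (x ^ 3) = 3 * v x := by
    intro x hx
    have h1 := hv_mul x x hx hx
    have h2 := hv_mul (x * x) x (mul_ne_zero hx hx) hx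
    have : x ^ 3 = x * x * x := by ring
    rw [this, h2, h1]; ring
  by_contra hcon
  push_neg at hcon
  -- v (24 * B) = 3 * v 2 + v B
  have h24F : (24 : F) = 2 * 2 * 2 * 3 := by norm_num
  have h24ne : (24 : F) ≠ 0 := by rw [h24F]; exact mul_ne_zero (mul_ne_zero (mul_ne_zero h2ne h2ne) h2ne) h3ne
  have hv24 : v (24 : F) = 3 * v 2 := by
    rw [h24F, hv_mul _ _ (mul_ne_zero (mul_ne_zero h2ne h2ne) h2ne) h3ne,
      hv_mul _ _ (mul_ne_zero h2ne h2ne) h2ne, hv_mul _ _ h2ne h2ne, hv3]; ring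
  have h27F : (27 : F) = 3 * 3 * 3 := by norm_num
  have h27ne : (27 : F) ≠ 0 := by rw [h27F]; exact mul_ne_zero (mul_ne_zero h3ne h3ne) h3ne
  have hv27 : v (27 : F) = 0 := by
    rw [h27F, hv_mul _ _ (mul_ne_zero h3ne h3ne) h3ne, hv_mul _ _ h3ne h3ne, hv3]; ring
  have hvA3 : v (A ^ 3) = 3 * v A := hcube A hA
  have hA3ne : A ^ 3 ≠ 0 := pow_ne_zero 3 hA
  have hv24B : v (24 * B) = 3 * v 2 + v B := by rw [hv_mul _ _ h24ne hB, hv24]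
  have hv27B : v (27 * B) = v B := by rw [hv_mul _ _ h27ne hB, hv27]; ring
  have h24Bne : (24 : F) * B ≠ 0 := mul_ne_zero h24ne hB
  have h27Bne : (27 : F) * B ≠ 0 := mul_ne_zero h27ne hB
  -- v (A^3 - 24*B) = 3 * v A
  have hlt24 : v (A ^ 3) < v (-(24 * B)) := by
    rw [hvneg _ h24Bne, hv24B, hvA3]; linarith
  have hval24 : v (A ^ 3 - 24 * B) = 3 * v A := by
    have := key (A ^ 3) (-(24 * B)) hA3ne (neg_ne_zero.mpr h24Bne) hlt24
    rw [← sub_eq_add_neg] at this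
    rw [this, hvA3]
  -- v (A^3 - 27*B) ≥ 3 * v A
  have hval27 : 3 * v A ≤ v (A ^ 3 - 27 * B) := by
    have h := hv_add (A ^ 3) (-(27 * B)) hA3ne (neg_ne_zero.mpr h27Bne)
      (by rw [← sub_eq_add_neg]; exact h27)
    rw [← sub_eq_add_neg, hvneg _ h27Bne, hv27B, hvA3] at h
    have : min (3 * v A) (v B) = 3 * v A := min_eq_left hcon
    linarith [this ▸ h]
  -- expand hj
  have hjl : v (B ^ 3 * (A ^ 3 - 27 * B)) = 3 * v B + v (A ^ 3 - 27 * B) := by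
    rw [hv_mul _ _ (pow_ne_zero 3 hB) h27, hcube B hB]
  have hjr : v (A ^ 3 * (A ^ 3 - 24 * B) ^ 3) = 12 * v A := by
    rw [hv_mul _ _ hA3ne (pow_ne_zero 3 h24), hcube _ h24, hvA3, hval24]; ring
  rw [hjl, hjr] at hj
  linarith
end

section
/- Let F be a field of characteristic different from 2 and 3, let a₄, a₆ ∈ F be such that the Weierstrass curve W : y² = x³ + a₄x + a₆ has discriminant Δ ≠ 0, and let λ ∈ F with λ ≠ 0 be a root of the modified 3-division polynomial, i.e., λ⁸ + 18a₄λ⁴ + 108a₆λ² − 27a₄² = 0. Set x_P = λ²/3 and y_P = (λ⁴ + 3a₄)/(6λ). Then y_P ≠ 0, the point P = (x_P, y_P) lies on W (i.e., y_P² = x_P³ + a₄x_P + a₆), and the slope of the tangent line to W at P equals λ, i.e., (3x_P² + a₄)/(2y_P) = λ. -/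
/-- Let `F` be a field of characteristic distinct from `2` and `3`, let
`W : y² = x³ + a₄x + a₆` be a Weierstrass curve over `F` with `Δ ≠ 0`, and let `lam ≠ 0` be a
root of the modified `3`-division polynomial `t⁸ + 18a₄t⁴ + 108a₆t² − 27a₄²`.  Set
`x_P = lam²/3` and `y_P = (lam⁴ + 3a₄)/(6 lam)`.  Then `y_P ≠ 0`, the point `(x_P, y_P)` lies
on `W`, and the tangent slope at this point is `lam`. -/
theorem stmt6 (F : Type*) [Field F] (h2 : ringChar F ≠ 2) (h3 : ringChar F ≠ 3)
    (a₄ a₆ : F)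
    (W : WeierstrassCurve F)
    (hW : W = { a₁ := 0, a₂ := 0, a₃ := 0, a₄ := a₄, a₆ := a₆ })
    (hΔ : W.Δ ≠ 0)
    (lam : F) (hlam : lam ≠ 0)
    (hroot : lam ^ 8 + 18 * a₄ * lam ^ 4 + 108 * a₆ * lam ^ 2 - 27 * a₄ ^ 2 = 0)
    (xP yP : F) (hxP : xP = lam ^ 2 / 3) (hyP : yP = (lam ^ 4 + 3 * a₄) / (6 * lam)) :
    yP ≠ 0 ∧ yP ^ 2 = xP ^ 3 + a₄ * xP + a₆ ∧ W.toAffine.Equation xP yP ∧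
    (3 * xP ^ 2 + a₄) / (2 * yP) = lam := by
  have h2' : (2 : F) ≠ 0 := by
    intro h
    have hd : ringChar F ∣ 2 :=
      (CharP.cast_eq_zero_iff F (ringChar F) 2).mp (by exact_mod_cast h)
    rcases (Nat.dvd_prime Nat.prime_two).mp hd with h1 | h1
    · exact CharP.ringChar_ne_one h1
    · exact h2 h1
  have h3' : (3 : F) ≠ 0 := by
    intro h
    have hd : ringChar F ∣ 3 :=
      (CharP.cast_eq_zero_iff F (ringChar F) 3).mp (by exact_mod_cast h)
    rcases (Nat.dvd_prime Nat.prime_three).mp hd with h1 | h1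
    · exact CharP.ringChar_ne_one h1
    · exact h3 h1
  have h6' : (6 : F) ≠ 0 := by
    have : (6 : F) = 2 * 3 := by norm_num
    rw [this]; exact mul_ne_zero h2' h3'
  have hΔ' : 4 * a₄ ^ 3 + 27 * a₆ ^ 2 ≠ 0 := by
    intro h
    apply hΔ
    subst hW
    simp only [WeierstrassCurve.Δ, WeierstrassCurve.b₂, WeierstrassCurve.b₄,
      WeierstrassCurve.b₆, WeierstrassCurve.b₈]
    ring_nf
    linear_combination (-16 : F) * h
  have hy4 : lam ^ 4 + 3 * a₄ ≠ 0 := by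
    intro hy
    have h9 : 108 * a₆ * lam ^ 2 - 72 * a₄ ^ 2 = 0 := by
      linear_combination hroot - (lam ^ 4 + 15 * a₄) * hy
    have hfin : (36 * lam ^ 4) * (4 * a₄ ^ 3 + 27 * a₆ ^ 2) = 0 := by
      linear_combination 144 * a₄ ^ 3 * hy + (9 * a₆ * lam ^ 2 + 6 * a₄ ^ 2) * h9
    rcases mul_eq_zero.mp hfin with h | h
    · rcases mul_eq_zero.mp h with h | h
      · exact h6' (mul_self_eq_zero.mp (by linear_combination h))
      · exact pow_ne_zero 4 hlam h
    · exact hΔ' h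
  have hyP0 : yP ≠ 0 := by
    rw [hyP]
    exact div_ne_zero hy4 (mul_ne_zero h6' hlam)
  have hon : yP ^ 2 = xP ^ 3 + a₄ * xP + a₆ := by
    rw [hxP, hyP]
    field_simp
    linear_combination (-9 : F) * hroot
  refine ⟨hyP0, hon, ?_, ?_⟩
  · rw [hW, WeierstrassCurve.Affine.equation_iff]
    simp only
    linear_combination hon
  · rw [hxP, hyP]
    field_simp
    ring
end

section
/- Let F be a field of characteristic different from 2 and 3, let a₄, a₆ ∈ F be such that the Weierstrass curve W : y² = x³ + a₄x + a₆ has discriminant Δ ≠ 0, and let λ ∈ F with λ ≠ 0 satisfy λ⁸ + 18a₄λ⁴ + 108a₆λ² − 27a₄² = 0. Then the point P = (λ²/3, (λ⁴ + 3a₄)/(6λ)) is a point of W(F) of order exactly 3: P ≠ O and 3•P = O in the group of points of W. -/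
open scoped Classical in
/-- Let `F` be a field of characteristic distinct from `2` and `3`, let
`W : y² = x³ + a₄x + a₆` be a Weierstrass curve over `F` with `Δ ≠ 0`, and let `lam ≠ 0` be a
root of `t⁸ + 18a₄t⁴ + 108a₆t² − 27a₄²`.  Then `P = (lam²/3, (lam⁴ + 3a₄)/(6 lam))` is a
nonsingular point of `W(F)` of exact order `3`: `P ≠ O` and `3 • P = O`. -/
theorem stmt7 (F : Type*) [Field F] (h2 : ringChar F ≠ 2) (h3 : ringChar F ≠ 3)
    (a₄ a₆ : F)
    (W : WeierstrassCurve F)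
    (hW : W = { a₁ := 0, a₂ := 0, a₃ := 0, a₄ := a₄, a₆ := a₆ })
    (hΔ : W.Δ ≠ 0)
    (lam : F) (hlam : lam ≠ 0)
    (hroot : lam ^ 8 + 18 * a₄ * lam ^ 4 + 108 * a₆ * lam ^ 2 - 27 * a₄ ^ 2 = 0) :
    ∃ h : W.toAffine.Nonsingular (lam ^ 2 / 3) ((lam ^ 4 + 3 * a₄) / (6 * lam)),
      WeierstrassCurve.Affine.Point.some _ _ h ≠ 0 ∧
      3 • WeierstrassCurve.Affine.Point.some _ _ h = 0 := by
  have h2' : (2 : F) ≠ 0 := Ring.two_ne_zero h2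
  have h3' : (3 : F) ≠ 0 := by
    rw [Ne, (by norm_cast : (3 : F) = ((3 : ℕ) : F)), ringChar.spec,
      Nat.dvd_prime Nat.prime_three]
    exact mt (or_iff_left h3).mp CharP.ringChar_ne_one
  have h6' : (6 : F) ≠ 0 := by
    have h6 : (6 : F) = 2 * 3 := by norm_num
    rw [h6]; exact mul_ne_zero h2' h3'
  set x : F := lam ^ 2 / 3 with hxdef
  set y : F := (lam ^ 4 + 3 * a₄) / (6 * lam) with hydef
  clear_value x y
  have ha₁ : W.a₁ = 0 := by rw [hW]
  have ha₂ : W.a₂ = 0 := by rw [hW]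
  have ha₃ : W.a₃ = 0 := by rw [hW]
  have ha₄ : W.a₄ = a₄ := by rw [hW]
  have ha₆ : W.a₆ = a₆ := by rw [hW]
  -- `lam ^ 4 + 3 * a₄ ≠ 0`, else `Δ = 0`
  have h34 : lam ^ 4 + 3 * a₄ ≠ 0 := by
    intro hl4
    apply hΔ
    have hΔval : W.Δ = -16 * (4 * a₄ ^ 3 + 27 * a₆ ^ 2) := by
      rw [WeierstrassCurve.Δ, WeierstrassCurve.b₂, WeierstrassCurve.b₄, WeierstrassCurve.b₆,
        WeierstrassCurve.b₈, ha₁, ha₂, ha₃, ha₄, ha₆]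
      ring
    have hkey : (4 * a₄ ^ 3 + 27 * a₆ ^ 2) * lam ^ 4 * 12 = 0 := by
      linear_combination (3 * a₆ * lam ^ 2 + 2 * a₄ ^ 2) * hroot +
        (48 * a₄ ^ 3 - (3 * a₆ * lam ^ 2 + 2 * a₄ ^ 2) * (lam ^ 4 + 15 * a₄)) * hl4
    have h12 : (12 : F) ≠ 0 := by
      have h12e : (12 : F) = 2 * (2 * 3) := by norm_num
      rw [h12e]; exact mul_ne_zero h2' (mul_ne_zero h2' h3')
    have hkey : (4 * a₄ ^ 3 + 27 * a₆ ^ 2) * lam ^ 4 = 0 := by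
      have := mul_eq_zero.mp hkey
      tauto
    have hlam4 : lam ^ 4 ≠ 0 := pow_ne_zero 4 hlam
    rw [hΔval, (mul_eq_zero.mp hkey).resolve_right hlam4]
    ring
  have hy0 : y ≠ 0 := hydef ▸ div_ne_zero h34 (mul_ne_zero h6' hlam)
  -- the point lies on the curve
  have heq : W.toAffine.Equation x y := by
    rw [WeierstrassCurve.Affine.equation_iff, ha₁, ha₂, ha₃, ha₄, ha₆, hxdef, hydef]
    field_simp
    linear_combination (-9 : F) * hroot
  have h : W.toAffine.Nonsingular x y :=
    (W.toAffine.equation_iff_nonsingular_of_Δ_ne_zero hΔ).mp heq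
  refine ⟨h, WeierstrassCurve.Affine.Point.some_ne_zero h, ?_⟩
  have hnegY : ∀ x' y' : F, W.toAffine.negY x' y' = -y' := by
    intro x' y'
    rw [WeierstrassCurve.Affine.negY, ha₁, ha₃]
    ring
  have hyne : y ≠ W.toAffine.negY x y := by
    rw [hnegY]
    intro hc
    have h2y : 2 * y = 0 := by linear_combination hc
    exact hy0 ((mul_eq_zero.mp h2y).resolve_left h2')
  have hslope : W.toAffine.slope x x y y = lam := by
    rw [WeierstrassCurve.Affine.slope_of_Y_ne rfl hyne, hnegY, ha₁, ha₂, ha₄]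
    have hd2 : y - -y ≠ 0 := by
      intro hdd
      have h2y : 2 * y = 0 := by linear_combination hdd
      exact hy0 ((mul_eq_zero.mp h2y).resolve_left h2')
    rw [div_eq_iff hd2, hxdef, hydef]
    field_simp
    ring
  have hxadd : W.toAffine.addX x x (W.toAffine.slope x x y y) = x := by
    rw [hslope, WeierstrassCurve.Affine.addX, ha₁, ha₂, hxdef]
    field_simp
    ring
  have hyadd : W.toAffine.addY x x y (W.toAffine.slope x x y y) = W.toAffine.negY x y := by
    rw [WeierstrassCurve.Affine.addY, WeierstrassCurve.Affine.negAddY, hxadd, hnegY, hnegY]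
    ring
  have hadd := WeierstrassCurve.Affine.Point.add_self_of_Y_ne (h₁ := h) hyne
  calc (3 : ℕ) • WeierstrassCurve.Affine.Point.some _ _ h
      = (WeierstrassCurve.Affine.Point.some _ _ h + WeierstrassCurve.Affine.Point.some _ _ h)
        + WeierstrassCurve.Affine.Point.some _ _ h := by
        rw [succ_nsmul, two_nsmul]
    _ = 0 := by
        rw [hadd]
        exact WeierstrassCurve.Affine.Point.add_of_Y_eq hxadd hyadd
end

section
/- Let F be a field of characteristic different from 2 and 3, let a₄, a₆ ∈ F be such that the Weierstrass curve W : y² = x³ + a₄x + a₆ has discriminant Δ ≠ 0, and let P = (x₀, y₀) be an affine point of W of order exactly 3 in W(F). Then y₀ ≠ 0, and the tangent slope λ = (3x₀² + a₄)/(2y₀) satisfies λ⁸ + 18a₄λ⁴ + 108a₆λ² − 27a₄² = 0 and x₀ = λ²/3. -/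
open WeierstrassCurve.Affine WeierstrassCurve.Affine.Point


open scoped Classical in
/-- Let `F` be a field of characteristic distinct from `2` and `3`, let
`W : y² = x³ + a₄x + a₆` be a Weierstrass curve over `F` with `Δ ≠ 0`, and let `P = (x₀, y₀)`
be an affine point of `W` of exact order `3` in `W(F)`.  Then `y₀ ≠ 0` and the tangent slope
`lam = (3x₀² + a₄)/(2y₀)` satisfies `lam⁸ + 18a₄lam⁴ + 108a₆lam² − 27a₄² = 0` and
`x₀ = lam²/3`. -/
theorem stmt8 (F : Type*) [Field F] (h2 : ringChar F ≠ 2) (h3 : ringChar F ≠ 3)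
    (a₄ a₆ : F)
    (W : WeierstrassCurve F)
    (hW : W = { a₁ := 0, a₂ := 0, a₃ := 0, a₄ := a₄, a₆ := a₆ })
    (hΔ : W.Δ ≠ 0)
    (x₀ y₀ : F) (hP : W.toAffine.Nonsingular x₀ y₀)
    (hord : addOrderOf (WeierstrassCurve.Affine.Point.some x₀ y₀ hP) = 3) :
    y₀ ≠ 0 ∧
    ∀ lam : F, lam = (3 * x₀ ^ 2 + a₄) / (2 * y₀) →
      lam ^ 8 + 18 * a₄ * lam ^ 4 + 108 * a₆ * lam ^ 2 - 27 * a₄ ^ 2 = 0 ∧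
      x₀ = lam ^ 2 / 3 := by
  have h2' : (2 : F) ≠ 0 := Ring.two_ne_zero h2
  have h3' : (3 : F) ≠ 0 := by
    intro h
    have := (CharP.cast_eq_zero_iff F (ringChar F) 3).mp (by exact_mod_cast h)
    rcases (Nat.prime_three.eq_one_or_self_of_dvd _ this) with h1 | h1
    · exact CharP.ringChar_ne_one h1
    · exact h3 h1
  set P : W.toAffine.Point := WeierstrassCurve.Affine.Point.some x₀ y₀ hP with hPdef
  have hy : y₀ ≠ W.toAffine.negY x₀ y₀ := by
    intro h
    have h2P : P + P = 0 := add_self_of_Y_eq h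
    have : addOrderOf P ∣ 2 := addOrderOf_dvd_of_nsmul_eq_zero (by rw [two_nsmul]; exact h2P)
    rw [hord] at this
    omega
  have hy0 : y₀ ≠ 0 := by
    intro h
    apply hy
    simp [WeierstrassCurve.Affine.negY, hW, h]
  refine ⟨hy0, fun lam hlam ↦ ?_⟩
  -- 3 • P = 0
  have h3P : P + P + P = 0 := by
    have := addOrderOf_nsmul_eq_zero P
    rw [hord] at this
    rwa [show (3 : ℕ) • P = P + P + P by rw [succ_nsmul, two_nsmul]] at this
  have h2P : P + P = some _ _ (nonsingular_add hP hP fun hxy => hy hxy.right) := add_self_of_Y_ne hy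
  have hnegP : P + P = -P := by
    rw [← neg_eq_of_add_eq_zero_left h3P]
  rw [h2P, hPdef, neg_some] at hnegP
  simp only [some.injEq] at hnegP
  obtain ⟨hx, -⟩ := hnegP
  -- hx : addX = x₀
  set L := W.toAffine.slope x₀ x₀ y₀ y₀ with hL
  have hLval : L = (3 * x₀ ^ 2 + a₄) / (2 * y₀) := by
    rw [hL, slope_of_Y_ne rfl hy]
    simp [WeierstrassCurve.Affine.negY, hW]
    ring_nf
  have hlamL : lam = L := by rw [hlam, hLval]
  have hxx : W.toAffine.addX x₀ x₀ L = x₀ := hx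
  rw [WeierstrassCurve.Affine.addX, hW] at hxx
  simp only at hxx
  have hx3 : 3 * x₀ = lam ^ 2 := by rw [hlamL]; linear_combination -hxx
  have heq : y₀ ^ 2 = x₀ ^ 3 + a₄ * x₀ + a₆ := by
    have := hP.1
    rw [WeierstrassCurve.Affine.equation_iff, hW] at this
    linear_combination this
  have hlam2 : lam * (2 * y₀) = 3 * x₀ ^ 2 + a₄ := by
    rw [hlam, div_mul_cancel₀]
    exact mul_ne_zero h2' hy0
  constructor
  · have key : 3 * x₀ ^ 4 + 6 * a₄ * x₀ ^ 2 + 12 * a₆ * x₀ - a₄ ^ 2 = 0 := by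
      linear_combination (-12 * x₀) * heq + (lam * 2 * y₀ + 3 * x₀ ^ 2 + a₄) * hlam2 +
        4 * y₀ ^ 2 * hx3
    linear_combination 27 * key - (lam ^ 6 + 3 * x₀ * lam ^ 4 + 9 * x₀ ^ 2 * lam ^ 2 +
      27 * x₀ ^ 3 + 18 * a₄ * (lam ^ 2 + 3 * x₀) + 108 * a₆) * hx3
  · field_simp
    linear_combination hx3
end

section
/- Let 𝔽₄ be a field with exactly 4 elements. The group of 𝔽₄-rational points of the Weierstrass curve W₀ : y² + y = x³ over 𝔽₄ has exactly 9 elements, and every point P ∈ W₀(𝔽₄) satisfies 3•P = O; that is, W₀(𝔽₄) is isomorphic to (ℤ/3ℤ)² and consists entirely of 3-torsion. -/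
open WeierstrassCurve.Affine WeierstrassCurve.Affine.Point

open Classical in
/-- Over a field `F₄` with exactly `4` elements, the group of rational points
of `W₀ : y² + y = x³` has exactly `9` elements and every point `P` satisfies `3 • P = O`; that
is, `W₀(𝔽₄)` is isomorphic to `(ℤ/3ℤ)²` and consists entirely of `3`-torsion. -/
theorem stmt10 (F : Type*) [Field F] [Fintype F] (hF : Fintype.card F = 4)
    (W₀ : WeierstrassCurve F)
    (hW₀ : W₀ = { a₁ := 0, a₂ := 0, a₃ := 1, a₄ := 0, a₆ := 0 }) :
    Nat.card W₀.toAffine.Point = 9 ∧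
    (∀ P : W₀.toAffine.Point, 3 • P = 0) ∧
    Nonempty (W₀.toAffine.Point ≃+ ZMod 3 × ZMod 3) := by
  classical
  subst hW₀
  set W : WeierstrassCurve F := { a₁ := 0, a₂ := 0, a₃ := 1, a₄ := 0, a₆ := 0 } with hW
  -- characteristic 2 facts
  have h4 : (4 : F) = 0 := by
    have := FiniteField.cast_card_eq_zero F
    rwa [hF] at this
  have h2 : (2 : F) = 0 := by
    have : (2 : F) ^ 2 = 0 := by rw [show (2:F)^2 = 4 by norm_num, h4]
    exact pow_eq_zero_iff (by norm_num) |>.mp this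
  have hx4 : ∀ x : F, x ^ 4 = x := by
    intro x
    have := FiniteField.pow_card x
    rwa [hF] at this
  have hcube : ∀ x : F, x ≠ 0 → x ^ 3 = 1 := by
    intro x hx
    have := FiniteField.pow_card_sub_one_eq_one x hx
    rwa [hF] at this
  have hyy : ∀ y : F, y ^ 2 + y = 0 ↔ y = 0 ∨ y = 1 := by
    intro y
    constructor
    · intro h
      rcases mul_eq_zero.mp (show y * (y + 1) = 0 by linear_combination h) with h' | h'
      · exact Or.inl h'
      · right; linear_combination h' - h2
    · rintro (rfl | rfl)
      · ring
      · linear_combination h2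
  have hy1 : ∀ y : F, y ≠ 0 → y ≠ 1 → y ^ 2 + y = 1 := by
    intro y h0 h1
    have ht : (y ^ 2 + y) ^ 2 + (y ^ 2 + y) = 0 := by
      linear_combination hx4 y + (y^3 + y^2 + y) * h2
    rcases (hyy _).mp ht with h | h
    · exact absurd ((hyy y).mp h) (by simp [h0, h1])
    · exact h
  -- the equation
  have heq : ∀ x y : F, W.toAffine.Equation x y ↔ y ^ 2 + y = x ^ 3 := by
    intro x y
    rw [equation_iff]
    simp [hW]
  have hΔ : W.toAffine.Δ ≠ 0 := by
    have : W.toAffine.Δ = 1 := by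
      simp [hW, WeierstrassCurve.Δ, WeierstrassCurve.b₂, WeierstrassCurve.b₄,
        WeierstrassCurve.b₆, WeierstrassCurve.b₈]
      linear_combination (-14 : F) * h2
    rw [this]; exact one_ne_zero
  have hns : ∀ x y : F, W.toAffine.Nonsingular x y ↔ y ^ 2 + y = x ^ 3 := by
    intro x y
    exact ⟨fun h => (heq x y).mp h.1, fun h => (W.toAffine.equation_iff_nonsingular_of_Δ_ne_zero hΔ).mp ((heq x y).mpr h)⟩
  -- cardinality
  have e : W.toAffine.Point ≃ Option {p : F × F // p.2 ^ 2 + p.2 = p.1 ^ 3} :=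
    { toFun := fun P => match P with
        | .zero => none
        | @WeierstrassCurve.Affine.Point.some _ _ _ x y h => some ⟨(x, y), (hns x y).mp h⟩
      invFun := fun o => match o with
        | Option.none => Point.zero
        | Option.some ⟨(x, y), h⟩ => Point.some _ _ ((hns x y).mpr h)
      left_inv := by rintro (_ | _) <;> rfl
      right_inv := by rintro (_ | ⟨⟨x, y⟩, h⟩) <;> rfl }
  have hfiber : ∀ x : F, Fintype.card {y : F // y ^ 2 + y = x ^ 3} = 2 := by
    intro x
    obtain ⟨y₀, hy₀⟩ : ∃ y₀ : F, y₀ ^ 2 + y₀ = x ^ 3 := by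
      by_cases hx : x = 0
      · exact ⟨0, by rw [hx]; ring⟩
      · have hex : ∃ y : F, y ≠ 0 ∧ y ≠ 1 := by
          by_contra hc
          push_neg at hc
          have hsub : (Finset.univ : Finset F) ⊆ {0, 1} := by
            intro y _
            rcases eq_or_ne y 0 with h | h
            · simp [h]
            · simp [hc y h]
          have h42 : (4 : ℕ) ≤ 2 := by
            calc (4 : ℕ) = Fintype.card F := hF.symm
            _ = Finset.univ.card := Finset.card_univ.symm
            _ ≤ ({0, 1} : Finset F).card := Finset.card_le_card hsub
            _ ≤ 2 := (Finset.card_insert_le _ _).trans (by simp)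
          omega
        obtain ⟨y, h0, h1⟩ := hex
        exact ⟨y, by rw [hcube x hx]; exact hy1 y h0 h1⟩
    have hset : (Finset.univ.filter fun y : F => y ^ 2 + y = x ^ 3) = {y₀, y₀ + 1} := by
      ext y
      simp only [Finset.mem_filter, Finset.mem_univ, true_and, Finset.mem_insert,
        Finset.mem_singleton]
      constructor
      · intro h
        have : (y - y₀) * (y + y₀ + 1) = 0 := by
          linear_combination h - hy₀
        rcases mul_eq_zero.mp this with h' | h'
        · left; linear_combination h'
        · right; linear_combination h' - (y₀ + 1) * h2
      · rintro (rfl | rfl)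
        · exact hy₀
        · linear_combination hy₀ + (y₀ + 1) * h2
    rw [Fintype.card_subtype, hset, Finset.card_insert_of_notMem, Finset.card_singleton]
    simp only [Finset.mem_singleton]
    intro h
    exact one_ne_zero (α := F) (by linear_combination -h)
  haveI : Fintype W.toAffine.Point := Fintype.ofEquiv _ e.symm
  have hcard : Nat.card W.toAffine.Point = 9 := by
    rw [Nat.card_eq_fintype_card, Fintype.card_congr e, Fintype.card_option,
      Fintype.card_congr (Equiv.subtypeProdEquivSigmaSubtype fun a b : F => b ^ 2 + b = a ^ 3),
      Fintype.card_sigma]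
    simp only [hfiber]
    rw [Finset.sum_const, Finset.card_univ, hF]
    norm_num
  have htors : ∀ P : W.toAffine.Point, 3 • P = 0 := by
    intro P
    cases P with
    | zero => show 3 • (0 : W.toAffine.Point) = 0; exact smul_zero 3
    | @some x y h =>
      have hne : y ≠ W.toAffine.negY x y := by
        simp only [negY, hW]
        intro hc
        exact one_ne_zero (α := F) (by linear_combination hc - y * h2)
      have hL : W.toAffine.slope x x y y = x ^ 2 := by
        rw [slope_of_Y_ne rfl hne, div_eq_iff (sub_ne_zero.mpr hne)]
        simp only [negY, hW]
        linear_combination (x ^ 2 - x ^ 2 * y) * h2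
      have hx' : W.toAffine.addX x x (W.toAffine.slope x x y y) = x := by
        rw [hL, addX]
        simp only [hW]
        linear_combination hx4 x - x * h2
      have hy' : W.toAffine.addY x x y (W.toAffine.slope x x y y) = W.toAffine.negY x y := by
        rw [addY, negAddY, hx', hL]
        congr 1
        ring
      have h2P : Point.some _ _ h + Point.some _ _ h =
          Point.some _ _ (nonsingular_add h h fun hxy => hne hxy.right) := add_of_Y_ne hne
      have : (3 : ℕ) • Point.some _ _ h = Point.some _ _ h + Point.some _ _ h + Point.some _ _ h := by
        rw [show (3 : ℕ) = 2 + 1 from rfl, add_nsmul, two_nsmul, one_nsmul]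
      rw [this, h2P, add_of_Y_eq hx' hy']
  refine ⟨hcard, htors, ?_⟩
  letI : Module (ZMod 3) W.toAffine.Point := AddCommGroup.zmodModule htors
  haveI : Module.Finite (ZMod 3) W.toAffine.Point := Module.Finite.of_finite
  have hq : Fintype.card W.toAffine.Point = 9 := by rw [← Nat.card_eq_fintype_card, hcard]
  have hfr : Module.finrank (ZMod 3) W.toAffine.Point = 2 := by
    have hpow := Module.card_eq_pow_finrank (K := ZMod 3) (V := W.toAffine.Point)
    rw [hq, ZMod.card] at hpow
    have : (9 : ℕ) = 3 ^ 2 := by norm_num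
    rw [this] at hpow
    exact (Nat.pow_right_injective (by norm_num) hpow.symm)
  let b := Module.finBasisOfFinrankEq (ZMod 3) W.toAffine.Point hfr
  exact ⟨b.equivFun.toAddEquiv.trans (LinearEquiv.finTwoArrow (ZMod 3) (ZMod 3)).toAddEquiv⟩
end

section
/- Let F be a field of characteristic 2 and let ζ ∈ F satisfy ζ² + ζ + 1 = 0 (a primitive cube root of unity). The points of exact order 3 of the Weierstrass curve W₀ : y² + y = x³ in W₀(F) are precisely the eight affine points (0,0), (0,1), (1,ζ), (1,ζ²), (ζ,ζ), (ζ,ζ²), (ζ²,ζ), (ζ²,ζ²); that is, an affine point P = (x,y) of W₀ satisfies 3•P = O if and only if (x,y) is one of these eight pairs. -/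
open WeierstrassCurve.Affine WeierstrassCurve.Affine.Point

open Classical in
/-- Let `F` be a field of characteristic `2` and `ζ ∈ F` with
`ζ² + ζ + 1 = 0`.  The points of exact order `3` of `W₀ : y² + y = x³` in `W₀(F)` are exactly
the eight affine points `(0,0), (0,1), (1,ζ), (1,ζ²), (ζ,ζ), (ζ,ζ²), (ζ²,ζ), (ζ²,ζ²)`: an
affine point `P = (x, y)` of `W₀` satisfies `3 • P = O` if and only if `(x, y)` is one of
these eight pairs. -/
theorem stmt11 (F : Type*) [Field F] [CharP F 2] (ζ : F) (hζ : ζ ^ 2 + ζ + 1 = 0)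
    (W₀ : WeierstrassCurve F)
    (hW₀ : W₀ = { a₁ := 0, a₂ := 0, a₃ := 1, a₄ := 0, a₆ := 0 })
    (x y : F) (h : W₀.toAffine.Nonsingular x y) :
    3 • WeierstrassCurve.Affine.Point.some x y h = 0 ↔
      (x, y) = (0, 0) ∨ (x, y) = (0, 1) ∨
      (x, y) = (1, ζ) ∨ (x, y) = (1, ζ ^ 2) ∨
      (x, y) = (ζ, ζ) ∨ (x, y) = (ζ, ζ ^ 2) ∨
      (x, y) = (ζ ^ 2, ζ) ∨ (x, y) = (ζ ^ 2, ζ ^ 2) := by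
  subst hW₀
  let W : WeierstrassCurve.Affine F :=
    ({ a₁ := 0, a₂ := 0, a₃ := 1, a₄ := 0, a₆ := 0 } : WeierstrassCurve F).toAffine
  have ha₁ : W.a₁ = 0 := rfl
  have ha₂ : W.a₂ = 0 := rfl
  have ha₃ : W.a₃ = 1 := rfl
  have ha₄ : W.a₄ = 0 := rfl
  have ha₆ : W.a₆ = 0 := rfl
  have htwo : (2 : F) = 0 := by exact_mod_cast CharP.cast_eq_zero F 2
  have hζ3 : ζ ^ 3 = 1 := by linear_combination (ζ - 1) * hζ
  have heq : y ^ 2 + y = x ^ 3 := by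
    have := (equation_iff (W := W) x y).mp h.1
    rw [ha₁, ha₂, ha₃, ha₄, ha₆] at this
    linear_combination this
  have hne : y ≠ W.negY x y := by
    intro hy
    rw [negY, ha₁, ha₃] at hy
    have : (1 : F) = 0 := by linear_combination hy - y * htwo
    simp at this
  have hnegY : W.negY x y = y + 1 := by
    rw [negY, ha₁, ha₃]; linear_combination -(y + 1) * htwo
  have hx2 : W.addX x x (W.slope x x y y) = x ^ 4 := by
    rw [slope_of_Y_ne rfl hne]
    have hden : y - W.negY x y = 1 := by rw [hnegY]; linear_combination -htwo
    rw [addX, hden, ha₁, ha₂, ha₄, div_one]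
    linear_combination (4 * x ^ 4 - x) * htwo
  have key : 3 • WeierstrassCurve.Affine.Point.some x y h = 0 ↔ x ^ 4 = x := by
    have e3 : 3 • WeierstrassCurve.Affine.Point.some x y h =
        (WeierstrassCurve.Affine.Point.some x y h + WeierstrassCurve.Affine.Point.some x y h) +
          WeierstrassCurve.Affine.Point.some x y h := by
      rw [show (3 : ℕ) = 2 + 1 from rfl, add_nsmul, two_nsmul, one_nsmul]
    have h2 : WeierstrassCurve.Affine.Point.some x y h + WeierstrassCurve.Affine.Point.some x y h =
        WeierstrassCurve.Affine.Point.some _ _ (nonsingular_add h h fun hxy => hne hxy.2) :=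
      add_self_of_Y_ne hne
    rw [e3, h2]
    constructor
    · intro h3
      by_contra hxx
      rw [← hx2] at hxx
      rw [add_of_X_ne hxx] at h3
      exact some_ne_zero _ h3
    · intro hx4
      have hxx : W.addX x x (W.slope x x y y) = x := hx2.trans hx4
      rcases Y_eq_of_X_eq (nonsingular_add h h fun hxy => hne hxy.2).1 h.1 hxx with hy | hy
      · exfalso
        have heq2 : WeierstrassCurve.Affine.Point.some _ _ (nonsingular_add h h fun hxy => hne hxy.2) =
            WeierstrassCurve.Affine.Point.some x y h := by
          simp only [some.injEq]
          exact ⟨hxx, hy⟩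
        rw [heq2] at h2
        have := add_left_cancel (h2.trans (add_zero (WeierstrassCurve.Affine.Point.some x y h)).symm)
        exact some_ne_zero _ this
      · exact add_of_Y_eq hxx hy
  rw [key]
  constructor
  · intro hx4
    have hfac : x * (x - 1) * (x - ζ) * (x - ζ ^ 2) = 0 := by
      linear_combination hx4 + (-x ^ 3 + ζ * x ^ 2 - (ζ - 1) * x) * hζ
    have hyfac1 : x = 0 → y * (y - 1) = 0 := by
      intro hx0; rw [hx0] at heq; linear_combination heq - y * htwo
    have hyfac : x ^ 3 = 1 → (y - ζ) * (y - ζ ^ 2) = 0 := by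
      intro hx1
      linear_combination heq + hx1 + (-y + ζ - 1) * hζ + htwo
    rcases mul_eq_zero.mp hfac with h01 | hc
    · rcases mul_eq_zero.mp h01 with h01 | hb
      · rcases mul_eq_zero.mp h01 with ha | hb
        · rcases mul_eq_zero.mp (hyfac1 ha) with hy0 | hy1
          · exact Or.inl (by rw [ha, hy0])
          · exact Or.inr (Or.inl (by rw [ha, sub_eq_zero.mp hy1]))
        · have hx1 : x = 1 := sub_eq_zero.mp hb
          have : x ^ 3 = 1 := by rw [hx1]; ring
          rcases mul_eq_zero.mp (hyfac this) with hy0 | hy1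
          · exact Or.inr (Or.inr (Or.inl (by rw [hx1, sub_eq_zero.mp hy0])))
          · exact Or.inr (Or.inr (Or.inr (Or.inl (by rw [hx1, sub_eq_zero.mp hy1]))))
      · have hx1 : x = ζ := sub_eq_zero.mp hb
        have : x ^ 3 = 1 := by rw [hx1]; exact hζ3
        rcases mul_eq_zero.mp (hyfac this) with hy0 | hy1
        · exact Or.inr (Or.inr (Or.inr (Or.inr (Or.inl (by rw [hx1, sub_eq_zero.mp hy0])))))
        · exact Or.inr (Or.inr (Or.inr (Or.inr (Or.inr (Or.inl (by rw [hx1, sub_eq_zero.mp hy1]))))))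
    · have hx1 : x = ζ ^ 2 := sub_eq_zero.mp hc
      have : x ^ 3 = 1 := by rw [hx1]; linear_combination (ζ ^ 3 + 1) * hζ3
      rcases mul_eq_zero.mp (hyfac this) with hy0 | hy1
      · exact Or.inr (Or.inr (Or.inr (Or.inr (Or.inr (Or.inr (Or.inl (by rw [hx1, sub_eq_zero.mp hy0])))))))
      · exact Or.inr (Or.inr (Or.inr (Or.inr (Or.inr (Or.inr (Or.inr (by rw [hx1, sub_eq_zero.mp hy1])))))))
  · rintro (hp | hp | hp | hp | hp | hp | hp | hp) <;>
      simp only [Prod.mk.injEq] at hp <;> rw [hp.1]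
    · ring
    · ring
    · ring
    · ring
    · linear_combination ζ * hζ3
    · linear_combination ζ * hζ3
    · linear_combination (ζ ^ 5 + ζ ^ 2) * hζ3
    · linear_combination (ζ ^ 5 + ζ ^ 2) * hζ3
end

section
/- For every integer m ≥ 1, the number of 𝔽_{2^m}-rational points of the Weierstrass curve W₀ : y² + y = x³ over the field 𝔽_{2^m} with 2^m elements equals 2^m + 1 if m is odd, and equals 2^m + 1 − 2·(−2)^{m/2} if m is even. (Equivalently, the trace of the 2^m-power Frobenius is αᵐ + ᾱᵐ where α = √−2, so it is 0 for m odd and 2(−2)^{m/2} for m even.) -/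
set_option linter.unusedSectionVars false
set_option linter.unusedTactic false

open Finset

noncomputable section Stmt12Aux

variable {F : Type} [Field F] [Fintype F]

def asProp (c : F) : Prop := ∃ y : F, y ^ 2 + y = c

instance : DecidablePred (asProp (F := F)) := fun _ => Classical.dec _

instance : DecidableEq F := fun _ _ => Classical.dec _

def chi (c : F) : ℤ := if asProp c then 1 else -1

lemma chi_eq_one {c : F} (h : asProp c) : chi c = 1 := if_pos h
lemma chi_eq_neg_one {c : F} (h : ¬ asProp c) : chi c = -1 := if_neg h

variable (h2 : (2 : F) = 0)

section withChar
include h2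

lemma addSelf (a : F) : a + a = 0 := by
  have : a + a = 2 * a := by ring
  rw [this, h2, zero_mul]

lemma addCancel {a b : F} (h : a + b = 0) : a = b := by
  have hb := addSelf h2 b
  calc a = a + (b + b) := by rw [hb, add_zero]
    _ = (a + b) + b := by ring
    _ = b := by rw [h, zero_add]

lemma sqAdd (a b : F) : (a + b) ^ 2 = a ^ 2 + b ^ 2 := by
  linear_combination a * b * h2

lemma sqInj {a b : F} (h : a ^ 2 = b ^ 2) : a = b := by
  apply addCancel h2
  have h1 : (a + b) ^ 2 = 0 := by rw [sqAdd h2, h]; exact addSelf h2 _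
  exact pow_eq_zero_iff (n := 2) (by norm_num) |>.mp h1

lemma sqSurj (a : F) : ∃ b : F, b ^ 2 = a := by
  have : Function.Surjective (fun b : F => b ^ 2) :=
    Finite.injective_iff_surjective.mp (fun x y h => sqInj h2 h)
  exact this a

lemma asFiber {c y₀ : F} (h : y₀ ^ 2 + y₀ = c) (y : F) :
    y ^ 2 + y = c ↔ y = y₀ ∨ y = y₀ + 1 := by
  constructor
  · intro hy
    have hz : (y + y₀) * ((y + y₀) + 1) = 0 := by
      linear_combination hy - h + (y * y₀ + y₀ + y₀ ^ 2) * h2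
    rcases mul_eq_zero.mp hz with h' | h'
    · exact Or.inl (addCancel h2 h')
    · exact Or.inr (addCancel h2 (by linear_combination h'))
  · rintro (rfl | rfl)
    · exact h
    · linear_combination h + (y₀ + 1) * h2

lemma fiber_card {c : F} (h : asProp c) :
    (univ.filter (fun y : F => y ^ 2 + y = c)).card = 2 := by
  obtain ⟨y₀, hy₀⟩ := h
  have : univ.filter (fun y : F => y ^ 2 + y = c) = {y₀, y₀ + 1} := by
    ext y
    simp [asFiber h2 hy₀]
  rw [this]
  rw [card_insert_of_notMem, card_singleton]
  simp only [mem_singleton]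
  intro hmem
  exact one_ne_zero (by linear_combination -hmem)

lemma fiber_card_int (c : F) :
    ((univ.filter (fun y : F => y ^ 2 + y = c)).card : ℤ) = 1 + chi c := by
  by_cases h : asProp c
  · rw [fiber_card h2 h, chi_eq_one h]; norm_num
  · rw [chi_eq_neg_one h]
    have : univ.filter (fun y : F => y ^ 2 + y = c) = ∅ := by
      ext y; simp only [mem_filter, mem_univ, true_and, notMem_empty, iff_false]
      exact fun hy => h ⟨y, hy⟩
    rw [this]; simp

lemma asProp_closed {a b : F} (ha : asProp a) (hb : asProp b) : asProp (a + b) := by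
  obtain ⟨y, hy⟩ := ha; obtain ⟨z, hz⟩ := hb
  exact ⟨y + z, by rw [sqAdd h2]; linear_combination hy + hz⟩

lemma asProp_cancel {a b : F} (ha : asProp a) (hab : asProp (a + b)) : asProp b := by
  have := asProp_closed h2 ha hab
  have hb : a + (a + b) = b := by
    have := addSelf h2 a
    linear_combination this
  rwa [hb] at this

lemma card_asSet : 2 * (univ.filter (asProp (F := F))).card = Fintype.card F := by
  have key : (univ : Finset F).card
      = ∑ c ∈ univ.filter (asProp (F := F)),
          (univ.filter (fun y : F => y ^ 2 + y = c)).card := by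
    apply Finset.card_eq_sum_card_fiberwise
    intro y _
    simp only [mem_filter, mem_univ, true_and]
    exact Finset.mem_filter.mpr ⟨mem_univ _, y, rfl⟩
  rw [Finset.card_univ] at key
  rw [key, Finset.sum_congr rfl (fun c hc => fiber_card h2 (by simpa using hc))]
  rw [Finset.sum_const, smul_eq_mul, mul_comm]

lemma asProp_compl {a b : F} (ha : ¬ asProp a) (hb : ¬ asProp b) : asProp (a + b) := by
  classical
  set A := univ.filter (asProp (F := F)) with hA
  set C := univ.filter (fun c : F => ¬ asProp c) with hC
  have hzero : asProp (0 : F) := ⟨0, by ring⟩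
  have himg : A.image (fun x => a + x) ⊆ C := by
    intro t ht
    simp only [mem_image, hA, mem_filter, mem_univ, true_and] at ht
    obtain ⟨x, hx, rfl⟩ := ht
    simp only [hC, mem_filter, mem_univ, true_and]
    intro habs
    exact ha (asProp_cancel h2 hx (by rwa [add_comm a x] at habs))
  have hcardA : A.card + C.card = Fintype.card F := by
    rw [hA, hC, Finset.card_filter_add_card_filter_not, Finset.card_univ]
  have hcards : 2 * A.card = Fintype.card F := card_asSet h2
  have hCcard : C.card = A.card := by omega
  have hinj : (A.image (fun x => a + x)).card = A.card :=
    Finset.card_image_of_injective _ (add_right_injective a)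
  have heq : A.image (fun x => a + x) = C :=
    Finset.eq_of_subset_of_card_le himg (by omega)
  have hbC : b ∈ C := by simp [hC, hb]
  rw [← heq] at hbC
  simp only [mem_image, hA, mem_filter, mem_univ, true_and] at hbC
  obtain ⟨x, hx, hax⟩ := hbC
  have : a + b = x := by linear_combination - hax + a * h2
  rwa [this]

lemma chi_add (a b : F) : chi (a + b) = chi a * chi b := by
  by_cases ha : asProp a <;> by_cases hb : asProp b
  · rw [chi_eq_one ha, chi_eq_one hb, chi_eq_one (asProp_closed h2 ha hb)]; ring
  · rw [chi_eq_one ha, chi_eq_neg_one hb, chi_eq_neg_one (fun h => hb (asProp_cancel h2 ha h))]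
    ring
  · rw [chi_eq_neg_one ha, chi_eq_one hb,
      chi_eq_neg_one (fun h => ha ?_)]
    · ring
    · rw [add_comm] at h; exact asProp_cancel h2 hb h
  · rw [chi_eq_neg_one ha, chi_eq_neg_one hb, chi_eq_one (asProp_compl h2 ha hb)]; ring

lemma chi_zero : chi (0 : F) = 1 := chi_eq_one ⟨0, by ring⟩

lemma chi_sq (a : F) : chi (a ^ 2) = chi a := by
  by_cases h : asProp a
  · obtain ⟨y, hy⟩ := h
    rw [chi_eq_one ⟨y, hy⟩]
    apply chi_eq_one
    exact ⟨y ^ 2, by rw [← sqAdd h2, hy]⟩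
  · rw [chi_eq_neg_one h]
    apply chi_eq_neg_one
    rintro ⟨z, hz⟩
    apply h
    obtain ⟨w, hw⟩ := sqSurj h2 z
    refine ⟨w, sqInj h2 ?_⟩
    rw [sqAdd h2]
    rw [← hw] at hz
    linear_combination hz

lemma sum_chi : ∑ t : F, chi t = 0 := by
  classical
  rw [show (fun t : F => chi t) = fun t => if asProp t then (1:ℤ) else -1 from rfl]
  rw [Finset.sum_ite]
  rw [Finset.sum_const, Finset.sum_const]
  have h1 : (univ.filter (asProp (F := F))).card
      + (univ.filter (fun c : F => ¬ asProp c)).card = Fintype.card F := by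
    rw [Finset.card_filter_add_card_filter_not, Finset.card_univ]
  have h2' : 2 * (univ.filter (asProp (F := F))).card = Fintype.card F := card_asSet h2
  have : (univ.filter (fun c : F => ¬ asProp c)).card = (univ.filter (asProp (F := F))).card := by
    omega
  rw [this]
  push_cast
  ring

lemma sum_chi_mul {c : F} (hc : c ≠ 0) : ∑ t : F, chi (c * t) = 0 := by
  rw [← sum_chi h2]
  exact Fintype.sum_bijective (fun t : F => c * t)
    ((Equiv.mulLeft₀ c hc).bijective) _ _ (fun x => rfl)


lemma innerSum12 (u : F) :
    (∑ y : F, chi (u ^ 3 + u ^ 2 * y + u * y ^ 2))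
      = if u ^ 4 = u then (Fintype.card F : ℤ) * chi (u ^ 3) else 0 := by
  obtain ⟨v, hv⟩ := sqSurj h2 u
  have key : ∀ y : F, chi (u ^ 3 + u ^ 2 * y + u * y ^ 2)
      = chi (u ^ 3) * chi ((u ^ 2 + v) * y) := by
    intro y
    have e1 : u ^ 3 + u ^ 2 * y + u * y ^ 2 = u ^ 3 + (u ^ 2 * y + u * y ^ 2) := by ring
    rw [e1, chi_add h2]
    congr 1
    have e2 : u * y ^ 2 = (v * y) ^ 2 := by rw [← hv]; ring
    calc chi (u ^ 2 * y + u * y ^ 2) = chi (u ^ 2 * y) * chi (u * y ^ 2) := chi_add h2 _ _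
      _ = chi (u ^ 2 * y) * chi (v * y) := by rw [e2, chi_sq h2]
      _ = chi (u ^ 2 * y + v * y) := (chi_add h2 _ _).symm
      _ = chi ((u ^ 2 + v) * y) := by rw [add_mul]
  by_cases hcase : u ^ 4 = u
  · have hveq : v = u ^ 2 := by
      apply sqInj h2
      rw [hv]
      calc u = u ^ 4 := hcase.symm
        _ = (u ^ 2) ^ 2 := by ring
    rw [if_pos hcase]
    calc (∑ y : F, chi (u ^ 3 + u ^ 2 * y + u * y ^ 2))
        = ∑ y : F, chi (u ^ 3) * chi ((u ^ 2 + v) * y) := by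
          exact Finset.sum_congr rfl fun y _ => key y
      _ = ∑ y : F, chi (u ^ 3) := by
          apply Finset.sum_congr rfl
          intro y _
          have h0 : u ^ 2 + v = 0 := by rw [hveq]; exact addSelf h2 _
          rw [h0, zero_mul, chi_zero h2, mul_one]
      _ = (Fintype.card F : ℤ) * chi (u ^ 3) := by
          rw [Finset.sum_const, Finset.card_univ, nsmul_eq_mul]
  · have hne : u ^ 2 + v ≠ 0 := by
      intro h
      apply hcase
      have hveq : u ^ 2 = v := addCancel h2 h
      calc u ^ 4 = (u ^ 2) ^ 2 := by ring
        _ = v ^ 2 := by rw [hveq]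
        _ = u := hv
    rw [if_neg hcase]
    calc (∑ y : F, chi (u ^ 3 + u ^ 2 * y + u * y ^ 2))
        = ∑ y : F, chi (u ^ 3) * chi ((u ^ 2 + v) * y) := by
          exact Finset.sum_congr rfl fun y _ => key y
      _ = chi (u ^ 3) * ∑ y : F, chi ((u ^ 2 + v) * y) := by rw [Finset.mul_sum]
      _ = 0 := by rw [sum_chi_mul h2 hne, mul_zero]

lemma main_sum_sq :
    (∑ x : F, chi (x ^ 3)) ^ 2
      = (Fintype.card F : ℤ) *
          (1 + ((univ.filter (fun u : F => u ^ 3 = 1)).card : ℤ) * chi (1 : F)) := by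
  have step1 : (∑ x : F, chi (x ^ 3)) ^ 2
      = ∑ y : F, ∑ u : F, chi (u ^ 3 + u ^ 2 * y + u * y ^ 2) := by
    rw [sq, Finset.sum_mul_sum]
    apply Finset.sum_congr rfl
    intro y _
    refine (Fintype.sum_bijective (fun u : F => u + y) (Equiv.addRight y).bijective
      (fun u => chi (u ^ 3 + u ^ 2 * y + u * y ^ 2))
      (fun x => chi (y ^ 3) * chi (x ^ 3)) ?_).symm
    intro u
    rw [← chi_add h2]
    congr 1
    linear_combination (- u ^ 2 * y - u * y ^ 2 - y ^ 3) * h2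
  rw [step1, Finset.sum_comm]
  have step2 : ∀ u : F, (∑ y : F, chi (u ^ 3 + u ^ 2 * y + u * y ^ 2))
      = if u ^ 4 = u then (Fintype.card F : ℤ) * chi (u ^ 3) else 0 :=
    innerSum12 h2
  rw [Finset.sum_congr rfl fun u _ => step2 u]
  rw [← Finset.sum_filter]
  have hset : univ.filter (fun u : F => u ^ 4 = u)
      = insert (0 : F) (univ.filter (fun u : F => u ^ 3 = 1)) := by
    ext u
    simp only [mem_filter, mem_univ, true_and, mem_insert]
    constructor
    · intro h
      have : u * (u ^ 3 - 1) = 0 := by linear_combination h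
      rcases mul_eq_zero.mp this with h' | h'
      · exact Or.inl h'
      · exact Or.inr (by linear_combination h')
    · rintro (rfl | h)
      · ring
      · linear_combination u * h
  rw [hset, Finset.sum_insert (by simp)]
  have hcongr : ∀ u ∈ univ.filter (fun u : F => u ^ 3 = 1),
      (Fintype.card F : ℤ) * chi (u ^ 3) = (Fintype.card F : ℤ) * chi (1 : F) := by
    intro u hu
    simp only [mem_filter, mem_univ, true_and] at hu
    rw [hu]
  rw [Finset.sum_congr rfl hcongr, Finset.sum_const, nsmul_eq_mul]
  have h03 : (0 : F) ^ 3 = 0 := by ring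
  rw [h03, chi_zero h2]
  push_cast
  ring

lemma affine_count :
    (Fintype.card {p : F × F // p.2 ^ 2 + p.2 = p.1 ^ 3} : ℤ)
      = (Fintype.card F : ℤ) + ∑ x : F, chi (x ^ 3) := by
  have e : {p : F × F // p.2 ^ 2 + p.2 = p.1 ^ 3}
      ≃ (x : F) × {y : F // y ^ 2 + y = x ^ 3} :=
    Equiv.subtypeProdEquivSigmaSubtype (fun x y => y ^ 2 + y = x ^ 3)
  rw [Fintype.card_congr e, Fintype.card_sigma]
  have : ∀ x : F, Fintype.card {y : F // y ^ 2 + y = x ^ 3}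
      = (univ.filter (fun y : F => y ^ 2 + y = x ^ 3)).card :=
    fun x => Fintype.card_subtype _
  rw [Finset.sum_congr rfl fun x _ => this x]
  push_cast
  rw [Finset.sum_congr rfl fun x (_ : x ∈ univ) => fiber_card_int h2 (x ^ 3)]
  rw [Finset.sum_add_distrib, Finset.sum_const, Finset.card_univ, nsmul_eq_mul, mul_one]


lemma cube_factor {omg : F} (h1 : omg ≠ 1) (h3 : omg ^ 3 = 1) : omg ^ 2 + omg + 1 = 0 := by
  have h : (omg - 1) * (omg ^ 2 + omg + 1) = 0 := by linear_combination h3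
  rcases mul_eq_zero.mp h with h' | h'
  · exact absurd (sub_eq_zero.mp h') h1
  · exact h'

lemma cube_roots {omg : F} (hω : omg ^ 2 + omg + 1 = 0) {u : F} (hu : u ^ 3 = 1) :
    u = 1 ∨ u = omg ∨ u = omg ^ 2 := by
  have h : (u - 1) * ((u - omg) * (u - omg ^ 2)) = 0 := by
    linear_combination hu + (-u ^ 2 + omg * u - omg + 1) * hω
  rcases mul_eq_zero.mp h with h' | h'
  · exact Or.inl (sub_eq_zero.mp h')
  · rcases mul_eq_zero.mp h' with h'' | h''
    · exact Or.inr (Or.inl (sub_eq_zero.mp h''))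
    · exact Or.inr (Or.inr (sub_eq_zero.mp h''))

lemma omega_ne_zero {omg : F} (h3 : omg ^ 3 = 1) : omg ≠ 0 := by
  intro h; rw [h] at h3; simp at h3

lemma one_ne_omega {omg : F} (h1 : omg ≠ 1) (h3 : omg ^ 3 = 1) : (1 : F) ≠ omg :=
  Ne.symm h1

lemma one_ne_omega_sq {omg : F} (h1 : omg ≠ 1) (h3 : omg ^ 3 = 1) : (1 : F) ≠ omg ^ 2 := by
  intro h
  apply h1
  calc omg = omg * 1 := by ring
    _ = omg * omg ^ 2 := by rw [← h]
    _ = omg ^ 3 := by ring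
    _ = 1 := h3

lemma omega_ne_omega_sq {omg : F} (h1 : omg ≠ 1) (h3 : omg ^ 3 = 1) : omg ≠ omg ^ 2 := by
  intro h
  apply h1
  have h4 : omg ^ 4 = omg := by
    calc omg ^ 4 = omg * omg ^ 3 := by ring
      _ = omg := by rw [h3, mul_one]
  have h5 : (1 : F) = omg := by
    calc (1 : F) = omg ^ 3 := h3.symm
      _ = omg * omg ^ 2 := by ring
      _ = omg * omg := by rw [← h]
      _ = omg ^ 2 := by ring
      _ = omg := h.symm
  exact h5.symm

lemma n3_card {omg : F} (h1 : omg ≠ 1) (h3 : omg ^ 3 = 1) :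
    (univ.filter (fun u : F => u ^ 3 = 1)).card = 3 := by
  have hω := cube_factor h2 h1 h3
  have hset : univ.filter (fun u : F => u ^ 3 = 1) = {1, omg, omg ^ 2} := by
    ext u
    simp only [mem_filter, mem_univ, true_and, mem_insert, mem_singleton]
    constructor
    · exact cube_roots h2 hω
    · rintro (rfl | rfl | rfl)
      · exact one_pow 3
      · exact h3
      · calc (omg ^ 2) ^ 3 = (omg ^ 3) ^ 2 := by ring
          _ = 1 := by rw [h3, one_pow]
  rw [hset]
  rw [Finset.card_insert_of_notMem, Finset.card_insert_of_notMem, Finset.card_singleton]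
  · simpa using omega_ne_omega_sq h2 h1 h3
  · simp only [mem_insert, mem_singleton]
    push_neg
    exact ⟨one_ne_omega h2 h1 h3, one_ne_omega_sq h2 h1 h3⟩

end withChar

section withChar2
variable (h2 : (2 : F) = 0)
include h2

lemma chi_one_even {omg : F} (h1 : omg ≠ 1) (h3 : omg ^ 3 = 1) : chi (1 : F) = 1 := by
  apply chi_eq_one
  exact ⟨omg, by linear_combination cube_factor h2 h1 h3 - h2⟩

lemma chi_one_odd (hno : ∀ w : F, w ^ 3 = 1 → w = 1) : chi (1 : F) = -1 := by
  apply chi_eq_neg_one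
  rintro ⟨y, hy⟩
  have hy3 : y ^ 3 = 1 := by linear_combination (y - 1) * hy + (y - 1) * h2
  have := hno y hy3
  subst this
  exact one_ne_zero (α := F) (by linear_combination h2 - hy)

lemma n3_card_odd (hno : ∀ w : F, w ^ 3 = 1 → w = 1) :
    (univ.filter (fun u : F => u ^ 3 = 1)).card = 1 := by
  have hset : univ.filter (fun u : F => u ^ 3 = 1) = {1} := by
    ext u
    simp only [mem_filter, mem_univ, true_and, mem_singleton]
    exact ⟨hno u, fun h => by rw [h]; exact one_pow 3⟩
  rw [hset, Finset.card_singleton]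

lemma S_dvd {omg : F} (h1 : omg ≠ 1) (h3 : omg ^ 3 = 1) :
    (3 : ℤ) ∣ (∑ x : F, chi (x ^ 3)) - 1 := by
  have hω := cube_factor h2 h1 h3
  have hω0 : omg ≠ 0 := omega_ne_zero h2 h3
  have key : ∀ b ∈ (univ.erase (0 : F)).image (fun x => x ^ 3),
      (((univ.erase (0 : F)).filter (fun x => x ^ 3 = b)).card) = 3 := by
    intro b hb
    obtain ⟨x₀, hx₀, rfl⟩ := Finset.mem_image.mp hb
    have hx₀0 : x₀ ≠ 0 := (Finset.mem_erase.mp hx₀).1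
    have hset : (univ.erase (0 : F)).filter (fun x => x ^ 3 = x₀ ^ 3)
        = {x₀, omg * x₀, omg ^ 2 * x₀} := by
      ext x
      simp only [mem_filter, mem_erase, mem_univ, and_true, mem_insert, mem_singleton]
      constructor
      · rintro ⟨hx0, hx⟩
        have hu : (x * x₀⁻¹) ^ 3 = 1 := by
          field_simp
          exact hx
        rcases cube_roots h2 hω hu with h | h | h
        · left
          field_simp at h
          exact h
        · right; left
          field_simp at h
          linear_combination h
        · right; right
          field_simp at h
          linear_combination h
      · rintro (rfl | rfl | rfl)
        · exact ⟨hx₀0, rfl⟩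
        · refine ⟨mul_ne_zero hω0 hx₀0, ?_⟩
          rw [mul_pow, h3, one_mul]
        · refine ⟨mul_ne_zero (pow_ne_zero 2 hω0) hx₀0, ?_⟩
          rw [mul_pow]
          have : (omg ^ 2) ^ 3 = 1 := by
            calc (omg ^ 2) ^ 3 = (omg ^ 3) ^ 2 := by ring
              _ = 1 := by rw [h3, one_pow]
          rw [this, one_mul]
    rw [hset]
    rw [Finset.card_insert_of_notMem, Finset.card_insert_of_notMem, Finset.card_singleton]
    · simp only [mem_singleton]
      intro h
      exact omega_ne_omega_sq h2 h1 h3 (mul_right_cancel₀ hx₀0 h)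
    · simp only [mem_insert, mem_singleton]
      push_neg
      constructor
      · intro h
        exact one_ne_omega h2 h1 h3 (mul_right_cancel₀ hx₀0 (by rw [one_mul]; exact h))
      · intro h
        exact one_ne_omega_sq h2 h1 h3 (mul_right_cancel₀ hx₀0 (by rw [one_mul]; exact h))
  have h0mem : (0 : F) ∈ (univ : Finset F) := mem_univ 0
  have hsplit : (∑ x : F, chi (x ^ 3))
      = chi ((0 : F) ^ 3) + ∑ x ∈ (univ : Finset F).erase 0, chi (x ^ 3) :=
    (Finset.add_sum_erase univ (fun x => chi (x ^ 3)) h0mem).symm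
  have h03 : ((0 : F) ^ 3) = (0 : F) := by ring
  rw [hsplit, h03, chi_zero h2, Finset.sum_comp (chi (F := F)) (fun x : F => x ^ 3)]
  have hcongr : ∀ b ∈ (univ.erase (0 : F)).image (fun x => x ^ 3),
      (((univ.erase (0 : F)).filter (fun x => x ^ 3 = b)).card) • chi b = 3 * chi b := by
    intro b hb
    rw [key b hb]
    rw [nsmul_eq_mul]
    norm_num
  rw [Finset.sum_congr rfl hcongr, ← Finset.mul_sum]
  exact ⟨_, by ring⟩

end withChar2

lemma two_pow_mod_three (n : ℕ) : 2 ^ n % 3 = if n % 2 = 0 then 1 else 2 := by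
  induction n with
  | zero => simp
  | succ k ih =>
    rw [pow_succ, Nat.mul_mod, ih]
    rcases Nat.even_or_odd k with hk | hk
    · have e1 : k % 2 = 0 := Nat.even_iff.mp hk
      have e2 : (k + 1) % 2 = 1 := by omega
      simp [e1, e2]
    · have e1 : k % 2 = 1 := Nat.odd_iff.mp hk
      have e2 : (k + 1) % 2 = 0 := by omega
      simp [e1, e2]

/-- point count via the option equivalence -/
lemma point_card (W : WeierstrassCurve.Affine F)
    (hns : ∀ x y : F, W.Nonsingular x y ↔ W.Equation x y) :
    Nat.card W.Point = 1 + Nat.card {p : F × F // W.Equation p.1 p.2} := by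
  haveI : Fintype {p : F × F // W.Equation p.1 p.2} := Fintype.ofFinite _
  have e : W.Point ≃ Option {p : F × F // W.Equation p.1 p.2} :=
    { toFun := fun P => match P with
        | .zero => none
        | @WeierstrassCurve.Affine.Point.some _ _ _ x y h => some ⟨(x, y), (hns x y).1 h⟩
      invFun := fun o => match o with
        | none => .zero
        | some ⟨(x, y), h⟩ => .some x y ((hns x y).2 h)
      left_inv := by rintro (_ | h) <;> rfl
      right_inv := by rintro (_ | ⟨⟨x, y⟩, h⟩) <;> rfl }
  rw [Nat.card_congr e, Nat.card_eq_fintype_card, Fintype.card_option,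
    Nat.card_eq_fintype_card, add_comm]

end Stmt12Aux

/-- For every `m ≥ 1`, the number of `𝔽_{2^m}`-rational points of
`W₀ : y² + y = x³` equals `2^m + 1` if `m` is odd, and `2^m + 1 − 2(−2)^{m/2}` if `m` is
even. -/
theorem stmt12 (m : ℕ) (hm : 1 ≤ m)
    (W₀ : WeierstrassCurve (GaloisField 2 m))
    (hW₀ : W₀ = { a₁ := 0, a₂ := 0, a₃ := 1, a₄ := 0, a₆ := 0 }) :
    (Nat.card W₀.toAffine.Point : ℤ) =
      if Odd m then 2 ^ m + 1 else 2 ^ m + 1 - 2 * (-2 : ℤ) ^ (m / 2) := by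
  subst hW₀
  set F := GaloisField 2 m with hF
  letI : Fintype F := Fintype.ofFinite F
  have h2 : (2 : F) = 0 := by
    have := CharP.cast_eq_zero F 2
    exact_mod_cast this
  have hq : (Fintype.card F) = 2 ^ m := by
    rw [← Nat.card_eq_fintype_card]
    exact GaloisField.card 2 m (by omega)
  set W := ({ a₁ := 0, a₂ := 0, a₃ := 1, a₄ := 0, a₆ := 0 } : WeierstrassCurve F) with hW
  have hns : ∀ x y : F, W.toAffine.Nonsingular x y ↔ W.toAffine.Equation x y := by
    intro x y
    rw [WeierstrassCurve.Affine.nonsingular_iff]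
    constructor
    · exact And.left
    · intro h
      refine ⟨h, Or.inr ?_⟩
      show y ≠ -y - W.toAffine.a₁ * x - W.toAffine.a₃
      intro hy
      have ha1 : W.toAffine.a₁ = 0 := rfl
      have ha3 : W.toAffine.a₃ = 1 := rfl
      rw [ha1, ha3] at hy
      exact one_ne_zero (α := F) (by linear_combination hy - y * h2)
  have hEq : ∀ x y : F, W.toAffine.Equation x y ↔ y ^ 2 + y = x ^ 3 := by
    intro x y
    rw [WeierstrassCurve.Affine.equation_iff]
    have ha1 : W.toAffine.a₁ = 0 := rfl
    have ha2 : W.toAffine.a₂ = 0 := rfl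
    have ha3 : W.toAffine.a₃ = 1 := rfl
    have ha4 : W.toAffine.a₄ = 0 := rfl
    have ha6 : W.toAffine.a₆ = 0 := rfl
    rw [ha1, ha2, ha3, ha4, ha6]
    constructor <;> intro h <;> linear_combination h
  have hpt : Nat.card W.toAffine.Point
      = 1 + Nat.card {p : F × F // W.toAffine.Equation p.1 p.2} := point_card _ hns
  have hsub : Nat.card {p : F × F // W.toAffine.Equation p.1 p.2}
      = Fintype.card {p : F × F // p.2 ^ 2 + p.2 = p.1 ^ 3} := by
    rw [Nat.card_congr (Equiv.subtypeEquiv (Equiv.refl (F × F))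
      (fun p => by simpa using hEq p.1 p.2))]
    exact Nat.card_eq_fintype_card
  set S := ∑ x : F, chi (x ^ 3) with hSdef
  have hcount : (Nat.card W.toAffine.Point : ℤ) = 1 + (2 ^ m : ℤ) + S := by
    rw [hpt, hsub]
    push_cast
    rw [affine_count h2, hq]
    push_cast
    ring
  have hSsq := main_sum_sq (F := F) h2
  by_cases hodd : Odd m
  · rw [if_pos hodd]
    have hmod3 : ¬ (3 ∣ 2 ^ m - 1) := by
      have hp := two_pow_mod_three m
      have h1m : m % 2 = 1 := Nat.odd_iff.mp hodd
      rw [h1m] at hp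
      have hge : 1 ≤ 2 ^ m := Nat.one_le_two_pow
      simp only [one_ne_zero, if_false] at hp
      omega
    have hno : ∀ w : F, w ^ 3 = 1 → w = 1 := by
      intro w hw3
      by_contra hne
      have hw0 : w ≠ 0 := omega_ne_zero h2 hw3
      set u : Fˣ := Units.mk0 w hw0 with hu
      have hu3 : u ^ 3 = 1 := by
        ext
        push_cast
        exact hw3
      have hord : orderOf u ∣ 3 := orderOf_dvd_of_pow_eq_one hu3
      have hord1 : orderOf u ≠ 1 := by
        intro h
        apply hne
        have := orderOf_eq_one_iff.mp h
        have : (u : F) = 1 := by rw [this]; rfl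
        simpa [hu] using this
      have h3' : orderOf u = 3 := by
        rcases (Nat.prime_three).eq_one_or_self_of_dvd _ hord with h | h
        · exact absurd h hord1
        · exact h
      have hdvd := orderOf_dvd_card (x := u)
      rw [h3', Fintype.card_units, hq] at hdvd
      exact hmod3 hdvd
    have hchi1 : chi (1 : F) = -1 := chi_one_odd h2 hno
    have hn3 : (univ.filter (fun u : F => u ^ 3 = 1)).card = 1 := n3_card_odd h2 hno
    rw [hn3, hchi1, hq] at hSsq
    have hS0 : S = 0 := by
      have hsq0 : S ^ 2 = 0 := by
        rw [hSdef, hSsq]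
        push_cast
        ring
      exact pow_eq_zero_iff (by norm_num : (2:ℕ) ≠ 0) |>.mp hsq0
    rw [hcount, hS0]
    push_cast
    ring
  · rw [if_neg hodd]
    have hm2 : m % 2 = 0 := Nat.even_iff.mp (Nat.not_odd_iff_even.mp hodd)
    set k := m / 2 with hk
    have hmk : m = 2 * k := by omega
    have hdvd3 : 3 ∣ 2 ^ m - 1 := by
      have hp := two_pow_mod_three m
      rw [hm2] at hp
      simp only [if_true] at hp
      have hge : 1 ≤ 2 ^ m := Nat.one_le_two_pow
      omega
    obtain ⟨u, hu⟩ := exists_prime_orderOf_dvd_card (G := Fˣ) 3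
      (by rw [Fintype.card_units, hq]; exact hdvd3)
    set ω : F := (u : F) with hωdef
    have h3 : ω ^ 3 = 1 := by
      have hu3 : u ^ 3 = 1 := by rw [← hu]; exact pow_orderOf_eq_one u
      have : ((u ^ 3 : Fˣ) : F) = ((1 : Fˣ) : F) := by rw [hu3]
      push_cast at this
      exact this
    have h1 : ω ≠ 1 := by
      intro h
      have huone : u = 1 := Units.ext (by rw [Units.val_one]; exact h)
      rw [huone, orderOf_one] at hu
      norm_num at hu
    have hchi1 : chi (1 : F) = 1 := chi_one_even h2 h1 h3
    have hn3 : (univ.filter (fun u : F => u ^ 3 = 1)).card = 3 := n3_card h2 h1 h3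
    rw [hn3, hchi1, hq] at hSsq
    push_cast at hSsq
    have hq2 : ((2 : ℤ)) ^ m = 2 ^ k * 2 ^ k := by rw [hmk, two_mul, pow_add]
    have hfac : (S - 2 ^ (k + 1)) * (S + 2 ^ (k + 1)) = 0 := by
      linear_combination hSsq + 4 * hq2
    have hScases : S = 2 ^ (k + 1) ∨ S = -(2 ^ (k + 1)) := by
      rcases mul_eq_zero.mp hfac with h | h
      · exact Or.inl (sub_eq_zero.mp h)
      · exact Or.inr (eq_neg_of_add_eq_zero_left h)
    have hSdvd : (3 : ℤ) ∣ S - 1 := S_dvd h2 h1 h3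
    have hmodeq : (2 : ℤ) ^ (k + 1) ≡ (-1 : ℤ) ^ (k + 1) [ZMOD 3] :=
      Int.ModEq.pow (k + 1) (by decide)
    have hmod : (3 : ℤ) ∣ (-1 : ℤ) ^ (k + 1) - 2 ^ (k + 1) := hmodeq.dvd
    rcases Nat.even_or_odd k with hke | hko
    · have hneg : ((-1 : ℤ)) ^ (k + 1) = -1 := Odd.neg_one_pow (Even.add_one hke)
      have hpow : ((-2 : ℤ)) ^ k = 2 ^ k := hke.neg_pow 2
      rw [hneg] at hmod
      have hSval : S = -(2 ^ (k + 1)) := by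
        rcases hScases with h | h
        · exfalso
          rw [h] at hSdvd
          omega
        · exact h
      rw [hcount, hSval, hpow]
      have : ((2 : ℤ)) ^ (k + 1) = 2 * 2 ^ k := by rw [pow_succ]; ring
      rw [this]
      ring
    · have hneg : ((-1 : ℤ)) ^ (k + 1) = 1 := Even.neg_one_pow (Odd.add_one hko)
      have hpow : ((-2 : ℤ)) ^ k = -(2 ^ k) := by
        have := hko.neg_pow (2 : ℤ)
        simpa using this
      rw [hneg] at hmod
      have hSval : S = 2 ^ (k + 1) := by
        rcases hScases with h | h
        · exact h
        · exfalso
          rw [h] at hSdvd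
          omega
      rw [hcount, hSval, hpow]
      have : ((2 : ℤ)) ^ (k + 1) = 2 * 2 ^ k := by rw [pow_succ]; ring
      rw [this]
      ring
end

section
/- The group SL₂(𝔽₃) has a unique Sylow 2-subgroup H; H is normal of order 8, H is isomorphic as a group to the quaternion group Q₈ of order 8, and H contains every element of SL₂(𝔽₃) whose order is a power of 2. In particular, every 2×2 matrix over 𝔽₃ of determinant 1 whose order is a power of 2 lies in this quaternion subgroup. -/
set_option maxRecDepth 40000

namespace Stmt17Aux

abbrev G3 := Matrix.SpecialLinearGroup (Fin 2) (ZMod 3)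

instance : DecidableEq G3 := fun a b => decidable_of_iff (a.1 = b.1) Subtype.ext_iff.symm

/-- The subgroup of elements of order dividing 8. -/
def K : Subgroup G3 where
  carrier := {g | g ^ 8 = 1}
  one_mem' := one_pow 8
  mul_mem' := by
    intro a b ha hb
    revert ha hb
    revert a b
    decide
  inv_mem' := by
    intro a ha
    show a⁻¹ ^ 8 = 1
    rw [inv_pow, ha, inv_one]

instance : DecidablePred (· ∈ K) := fun g => inferInstanceAs (Decidable (g ^ 8 = 1))

lemma K_normal : K.Normal := by
  constructor
  intro n hn g
  show (g * n * g⁻¹) ^ 8 = 1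
  rw [conj_pow, hn, mul_one, mul_inv_cancel]

lemma cardG3' : Fintype.card G3 = 24 := by decide

lemma cardG3 : Nat.card G3 = 24 := by
  rw [Nat.card_eq_fintype_card]; exact cardG3'

lemma cardK : Nat.card K = 8 := by
  rw [Nat.card_eq_fintype_card]; decide

lemma cardK' : Nat.card K = 2 ^ (Nat.card G3).factorization 2 := by
  rw [cardK, cardG3]
  have h : Nat.factorization 24 2 = 3 := by
    rw [show (24:ℕ) = 2^3 * 3 by norm_num, Nat.factorization_mul (by norm_num) (by norm_num)]
    rw [Nat.Prime.factorization_pow Nat.prime_two]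
    simp [Nat.Prime.factorization Nat.prime_three, Finsupp.single_apply]
  rw [h]
  norm_num

def ww : G3 := ⟨!![0,-1;1,0], by decide⟩
def tt : G3 := ⟨!![1,1;1,-1], by decide⟩

def f : QuaternionGroup 2 → G3
  | .a i => ww ^ i.val
  | .xa i => tt * ww ^ i.val

lemma f_mul : ∀ x y : QuaternionGroup 2, f (x * y) = f x * f y := by decide

lemma f_mem : ∀ x : QuaternionGroup 2, f x ∈ K := by decide

lemma f_inj : ∀ x y : QuaternionGroup 2, f x = f y → x = y := by decide

def φ : QuaternionGroup 2 →* K where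
  toFun x := ⟨f x, f_mem x⟩
  map_one' := by decide
  map_mul' x y := Subtype.ext (f_mul x y)

lemma φ_bij : Function.Bijective φ := by
  rw [Fintype.bijective_iff_injective_and_card]
  constructor
  · intro x y h
    exact f_inj x y (congrArg Subtype.val h)
  · decide

noncomputable def e : K ≃* QuaternionGroup 2 := (MulEquiv.ofBijective φ φ_bij).symm

end Stmt17Aux

open Stmt17Aux in
/-- `SL₂(𝔽₃)` has a unique Sylow `2`-subgroup `H`; `H` is normal of order
`8`, isomorphic to the quaternion group `Q₈`, and contains every element of `SL₂(𝔽₃)` of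
`2`-power order. -/
theorem stmt17 :
    ∃ H : Sylow 2 (Matrix.SpecialLinearGroup (Fin 2) (ZMod 3)),
      (∀ K : Sylow 2 (Matrix.SpecialLinearGroup (Fin 2) (ZMod 3)), K = H) ∧
      (H : Subgroup (Matrix.SpecialLinearGroup (Fin 2) (ZMod 3))).Normal ∧
      Nat.card (H : Subgroup (Matrix.SpecialLinearGroup (Fin 2) (ZMod 3))) = 8 ∧
      Nonempty ((H : Subgroup (Matrix.SpecialLinearGroup (Fin 2) (ZMod 3))) ≃*
        QuaternionGroup 2) ∧
      ∀ g : Matrix.SpecialLinearGroup (Fin 2) (ZMod 3),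
        (∃ k : ℕ, orderOf g = 2 ^ k) → g ∈ (H : Subgroup _) := by
  refine ⟨Sylow.ofCard K cardK', ?_, K_normal, cardK, ⟨e⟩, ?_⟩
  · haveI := Sylow.unique_of_normal (Sylow.ofCard K cardK') K_normal
    exact fun Q => Subsingleton.elim Q _
  · rintro g ⟨k, hk⟩
    have h1 : orderOf g ∣ 24 := cardG3' ▸ orderOf_dvd_card
    rw [hk] at h1
    have h2 : (2:ℕ) ^ k ∣ 8 := by
      refine (Nat.Coprime.dvd_of_dvd_mul_right ?_ (show 2^k ∣ 8*3 from h1))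
      exact Nat.Coprime.pow_left k (by decide)
    show g ^ 8 = 1
    exact orderOf_dvd_iff_pow_eq_one.mp (hk ▸ h2)
end

section
/- Let ρ be a faithful irreducible 2-dimensional complex representation of the group GL₂(𝔽₃) of invertible 2×2 matrices over the field with 3 elements. Then tr ρ(−I) = −2 (where −I is the central element of order 2), and for every element g of GL₂(𝔽₃) of order 8 the trace of ρ(g) squares to −2: (tr ρ(g))² = −2, i.e., tr ρ(g) = ±√−2 = ±i√2. -/
set_option maxRecDepth 100000

/-- A representation is irreducible when it has no invariant subspace other than `⊥` and `⊤`. -/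
def IsIrreducibleRep {k G V : Type*} [CommSemiring k] [Monoid G] [AddCommMonoid V] [Module k V]
    (ρ : Representation k G V) : Prop :=
  ∀ U : Submodule k V, (∀ g : G, ∀ v ∈ U, ρ g v ∈ U) → U = ⊥ ∨ U = ⊤

private abbrev M3 := Matrix (Fin 2) (Fin 2) (ZMod 3)
private abbrev G3 := Matrix.GeneralLinearGroup (Fin 2) (ZMod 3)

private lemma aux_pow4 : ∀ m : M3, m ^ 8 = 1 → m ^ 4 = 1 ∨ m ^ 4 = -1 := by decide

private lemma aux_conj : ∀ m : M3, m ^ 8 = 1 → m ^ 4 ≠ 1 →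
    ∃ k : M3, k.det ≠ 0 ∧ k * m = m ^ 3 * k := by decide

private lemma aux_ne : (-1 : M3) ≠ 1 := by decide

/-- Cayley–Hamilton for 2×2 complex matrices. -/
private lemma ch2 (M : Matrix (Fin 2) (Fin 2) ℂ) : M ^ 2 = M.trace • M - M.det • 1 := by
  rw [Matrix.eta_fin_two M]
  ext i j
  fin_cases i <;> fin_cases j <;>
    simp [pow_two, Matrix.mul_apply, Matrix.trace_fin_two, Matrix.det_fin_two, Fin.sum_univ_two,
      Matrix.one_apply] <;> ring

private lemma key (M : Matrix (Fin 2) (Fin 2) ℂ) (h4 : M ^ 4 = -1)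
    (hns : ∀ c : ℂ, M ^ 2 ≠ c • 1) (htr : (M ^ 3).trace = M.trace) :
    M.trace ^ 2 = -2 := by
  set t := M.trace with ht
  set d := M.det with hd
  have h2 : M ^ 2 = t • M - d • 1 := ch2 M
  have hMM : M * M = t • M - d • 1 := by rw [← pow_two]; exact h2
  have h3 : M ^ 3 = (t ^ 2 - d) • M - (t * d) • 1 := by
    rw [pow_succ, h2, sub_mul, Matrix.smul_mul, Matrix.smul_mul, one_mul, hMM, smul_sub, smul_smul,
      smul_smul]
    module
  have h4' : M ^ 4 = (t ^ 3 - 2 * t * d) • M - (t ^ 2 * d - d ^ 2) • 1 := by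
    rw [pow_succ, h3, sub_mul, Matrix.smul_mul, Matrix.smul_mul, one_mul, hMM, smul_sub, smul_smul,
      smul_smul]
    module
  -- coefficient of M must vanish
  have ha : t ^ 3 - 2 * t * d = 0 := by
    by_contra ha
    have hM : M = ((t ^ 3 - 2 * t * d)⁻¹ * (t ^ 2 * d - d ^ 2 - 1)) • 1 := by
      have h9 : (t ^ 3 - 2 * t * d) • M = (t ^ 2 * d - d ^ 2 - 1) • 1 := by
        have h10 := h4'.symm.trans h4
        calc (t ^ 3 - 2 * t * d) • M
            = ((t ^ 3 - 2 * t * d) • M - (t ^ 2 * d - d ^ 2) • 1) + (t ^ 2 * d - d ^ 2) • 1 := by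
              module
          _ = (-1 : Matrix (Fin 2) (Fin 2) ℂ) + (t ^ 2 * d - d ^ 2) • 1 := by rw [h10]
          _ = (t ^ 2 * d - d ^ 2 - 1) • 1 := by module
      calc M = (t ^ 3 - 2 * t * d)⁻¹ • ((t ^ 3 - 2 * t * d) • M) := by
              rw [smul_smul, inv_mul_cancel₀ ha, one_smul]
        _ = (t ^ 3 - 2 * t * d)⁻¹ • ((t ^ 2 * d - d ^ 2 - 1) • 1) := by rw [h9]
        _ = ((t ^ 3 - 2 * t * d)⁻¹ * (t ^ 2 * d - d ^ 2 - 1)) • 1 := by rw [smul_smul]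
    set c := (t ^ 3 - 2 * t * d)⁻¹ * (t ^ 2 * d - d ^ 2 - 1) with hc
    apply hns (c * c)
    rw [pow_two, hM, Matrix.smul_mul, Matrix.mul_smul, smul_smul, one_mul]
  -- t ≠ 0 since otherwise M² is scalar
  have htne : t ≠ 0 := by
    intro h0
    apply hns (-d)
    rw [h2, h0, zero_smul, zero_sub, neg_smul]
  have ht2 : t ^ 2 = 2 * d := by
    have : t * (t ^ 2 - 2 * d) = 0 := by linear_combination ha
    rcases mul_eq_zero.mp this with h | h
    · exact absurd h htne
    · linear_combination h
  -- trace relation: t³ - 3td = t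
  have htr3 : t ^ 3 - 3 * t * d = t := by
    have : (M ^ 3).trace = (t ^ 2 - d) * t - (t * d) * 2 := by
      rw [h3, Matrix.trace_sub, Matrix.trace_smul, Matrix.trace_smul, Matrix.trace_one]
      simp [← ht]
      try ring
    rw [htr] at this
    linear_combination -this
  have h5 : t * (t ^ 2 + 2) = 0 := by linear_combination -2 * htr3 + 3 * t * ht2
  rcases mul_eq_zero.mp h5 with h | h
  · exact absurd h htne
  · linear_combination h

/-- For a faithful irreducible `2`-dimensional complex representation `ρ` of
`GL₂(𝔽₃)`: the central element `−I` of order `2` has trace `−2`, and every element `g` of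
order `8` has `(tr ρ(g))² = −2`, i.e. `tr ρ(g) = ±i√2`. -/
theorem stmt19 {V : Type*} [AddCommGroup V] [Module ℂ V] [FiniteDimensional ℂ V]
    (ρ : Representation ℂ (Matrix.GeneralLinearGroup (Fin 2) (ZMod 3)) V)
    (hdim : Module.finrank ℂ V = 2) (hirr : IsIrreducibleRep ρ)
    (hfaithful : Function.Injective ρ) :
    LinearMap.trace ℂ V (ρ (-1)) = -2 ∧
    ∀ g : Matrix.GeneralLinearGroup (Fin 2) (ZMod 3),
      orderOf g = 8 → (LinearMap.trace ℂ V (ρ g)) ^ 2 = -2 := by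
  have hzne : (-1 : G3) ≠ 1 := by
    rw [Ne, Units.ext_iff, Units.val_neg, Units.val_one]
    exact aux_ne
  have hz2 : (-1 : G3) * (-1) = 1 := by rw [neg_mul_neg, one_mul]
  have hzc : ∀ h : G3, (-1 : G3) * h = h * (-1) := by
    intro h; rw [neg_one_mul, mul_neg_one]
  -- Step A: ρ(-1) = -1
  have hsq : ρ (-1) * ρ (-1) = 1 := by rw [← map_mul, hz2, map_one]
  have hρz : ρ (-1) = -1 := by
    set U : Submodule ℂ V := LinearMap.ker (ρ (-1) - 1) with hU
    have hinv : ∀ g : G3, ∀ v ∈ U, ρ g v ∈ U := by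
      intro g v hv
      rw [hU, LinearMap.mem_ker, LinearMap.sub_apply, Module.End.one_apply, sub_eq_zero] at hv ⊢
      calc ρ (-1) (ρ g v) = (ρ (-1) * ρ g) v := rfl
        _ = (ρ g * ρ (-1)) v := by rw [← map_mul, ← map_mul, hzc]
        _ = ρ g (ρ (-1) v) := rfl
        _ = ρ g v := by rw [hv]
    rcases hirr U hinv with hbot | htop
    · ext v
      have hmul : (ρ (-1) - 1) * (ρ (-1) + 1) = 0 := by
        have e : (ρ (-1) - 1) * (ρ (-1) + 1) = ρ (-1) * ρ (-1) - 1 := by noncomm_ring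
        rw [e, hsq, sub_self]
      have hmem : (ρ (-1) + 1) v ∈ U := by
        rw [hU, LinearMap.mem_ker]
        calc (ρ (-1) - 1) ((ρ (-1) + 1) v) = ((ρ (-1) - 1) * (ρ (-1) + 1)) v := rfl
          _ = 0 := by rw [hmul]; rfl
      rw [hbot, Submodule.mem_bot] at hmem
      have : ρ (-1) v + v = 0 := by
        simpa [LinearMap.add_apply, Module.End.one_apply] using hmem
      simp [eq_neg_of_add_eq_zero_left this]
    · exfalso
      apply hzne
      apply hfaithful
      rw [map_one]
      ext v
      have hv : v ∈ U := htop ▸ Submodule.mem_top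
      rw [hU, LinearMap.mem_ker, LinearMap.sub_apply, Module.End.one_apply, sub_eq_zero] at hv
      simpa using hv
  constructor
  · rw [hρz, map_neg, LinearMap.trace_one, hdim]
    norm_num
  · intro g hg
    have hg8 : g ^ 8 = 1 := by rw [← hg]; exact pow_orderOf_eq_one g
    have hg4ne : g ^ 4 ≠ 1 := by
      intro h
      have hdvd := orderOf_dvd_of_pow_eq_one h
      rw [hg] at hdvd
      exact absurd (Nat.le_of_dvd (by norm_num) hdvd) (by norm_num)
    have hm8 : ((g : M3)) ^ 8 = 1 := by
      rw [← Units.val_pow_eq_pow_val, hg8, Units.val_one]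
    have hm4ne : ((g : M3)) ^ 4 ≠ 1 := by
      intro h
      exact hg4ne (Units.ext (by rw [Units.val_pow_eq_pow_val, h, Units.val_one]))
    have hm4 : ((g : M3)) ^ 4 = -1 := (aux_pow4 _ hm8).resolve_left hm4ne
    have hg4 : g ^ 4 = -1 := by
      apply Units.ext
      rw [Units.val_pow_eq_pow_val, hm4, Units.val_neg, Units.val_one]
    have hρ4 : (ρ g) ^ 4 = -1 := by rw [← map_pow, hg4, hρz]
    -- conjugating element
    obtain ⟨k, hkdet, hkm⟩ := aux_conj _ hm8 hm4ne
    set h : G3 := Matrix.GeneralLinearGroup.mkOfDetNeZero k hkdet with hh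
    have hhk : (h : M3) = k := rfl
    have hconj : h * g = g ^ 3 * h := by
      apply Units.ext
      rw [Units.val_mul, Units.val_mul, Units.val_pow_eq_pow_val, hhk]
      exact hkm
    have hg3 : h * g * h⁻¹ = g ^ 3 := by
      rw [hconj, mul_inv_eq_iff_eq_mul]
    have htrace : LinearMap.trace ℂ V ((ρ g) ^ 3) = LinearMap.trace ℂ V (ρ g) := by
      have e1 : (ρ g) ^ 3 = ρ h * ρ g * ρ h⁻¹ := by
        rw [← map_pow, ← hg3, map_mul, map_mul]
      rw [e1, LinearMap.trace_mul_comm ℂ (ρ h * ρ g) (ρ h⁻¹), ← mul_assoc, ← map_mul, ← map_mul,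
        inv_mul_cancel, one_mul]
    -- ρ(g)² is not scalar
    have hns : ∀ c : ℂ, (ρ g) ^ 2 ≠ c • 1 := by
      intro c hc
      have hρg2 : ρ (g ^ 2) = c • 1 := by rw [map_pow]; exact hc
      have hcomm : g ^ 2 * h = h * g ^ 2 := by
        apply hfaithful
        rw [map_mul, map_mul, hρg2, smul_mul_assoc, mul_smul_comm, one_mul, mul_one]
      have h6 : h * g ^ 2 = g ^ 6 * h := by
        calc h * g ^ 2 = h * g * g := by rw [pow_two, ← mul_assoc]
          _ = g ^ 3 * h * g := by rw [hconj]
          _ = g ^ 3 * (h * g) := by rw [mul_assoc]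
          _ = g ^ 3 * (g ^ 3 * h) := by rw [hconj]
          _ = g ^ 6 * h := by rw [← mul_assoc, ← pow_add]
      have h7 : g ^ 2 * h = g ^ 2 * (g ^ 4 * h) := by
        rw [hcomm, h6, ← mul_assoc, ← pow_add]
      have h8 : (1 : G3) * h = g ^ 4 * h := by
        rw [one_mul]; exact mul_left_cancel h7 ▸ rfl
      exact hg4ne (mul_right_cancel h8).symm
    -- pass to matrices
    let b := Module.finBasisOfFinrankEq ℂ V hdim
    let E := LinearMap.toMatrixAlgEquiv b
    have htrE : ∀ f : V →ₗ[ℂ] V, LinearMap.trace ℂ V f = (E f).trace := by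
      intro f
      rw [LinearMap.trace_eq_matrix_trace ℂ b f]
      rfl
    have hM4 : (E (ρ g)) ^ 4 = -1 := by rw [← map_pow, hρ4, map_neg, map_one]
    have hMns : ∀ c : ℂ, (E (ρ g)) ^ 2 ≠ c • 1 := by
      intro c hc
      apply hns c
      apply E.injective
      rw [map_pow, map_smul, map_one]
      exact hc
    have hMtr : ((E (ρ g)) ^ 3).trace = (E (ρ g)).trace := by
      rw [← map_pow, ← htrE, ← htrE, htrace]
    have := key (E (ρ g)) hM4 hMns hMtr
    rwa [← htrE] at this
end
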